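/- arXiv:1011.5491 — 7 statements merged into one kernel-verified Lean document; each statement's English description precedes it below -/
import Mathlib

section
/- A permutation π ∈ S_n is separable (i.e., avoids both patterns 3142 and 2413) if and only if its inversion poset P(π) contains no induced subposet isomorphic to the four-element poset N with elements {a, b, c, d} whose only order relations are b < x, b < a, y < a (i.e., the poset whose Hasse diagram is the letter N: two minimal elements b, y and two maximal elements x, a, with b below both x and a, and y below only a). -/
/-- A weakly increasing subsequence of the word `w`, given as a set of positions. -/
def WkInc (w : List ℕ) (S : Finset (Fin w.length)) : Prop :=
  ∀ p ∈ S, ∀ q ∈ S, p < q → w.get p ≤ w.get q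

/-- The maximum total number of elements in a union of `d` pairwise disjoint weakly
increasing subsequences of `w`; by Greene's theorem this equals `μ₁ + ⋯ + μ_d` where
`μ = shape(w)` is the RSK shape of `w`. -/
noncomputable def greene (w : List ℕ) (d : ℕ) : ℕ :=
  sSup {N | ∃ S : Fin d → Finset (Fin w.length),
    (∀ i, WkInc w (S i)) ∧ (∀ i j, i ≠ j → Disjoint (S i) (S j)) ∧
    N = ∑ i, (S i).card}

/-- The `(k+1)`-st part (0-indexed `k`-th part) of the RSK shape of `w`. -/
noncomputable def shapePart (w : List ℕ) (k : ℕ) : ℕ := greene w (k + 1) - greene w k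

/-- The word `w` contains the permutation `π` as a pattern. -/
def ContainsPattern {m : ℕ} (π : Equiv.Perm (Fin m)) (w : List ℕ) : Prop :=
  ∃ f : Fin m → Fin w.length, StrictMono f ∧
    ∀ j k : Fin m,
      (w.get (f j) < w.get (f k) ↔ π j < π k) ∧
      (w.get (f k) < w.get (f j) ↔ π k < π j)

/-- The pattern 3142 (one-line notation), 0-indexed. -/
def p3142 : Equiv.Perm (Fin 4) := ⟨![2,0,3,1], ![1,3,0,2], by decide, by decide⟩

/-- The pattern 2413 (one-line notation), 0-indexed. -/
def p2413 : Equiv.Perm (Fin 4) := ⟨![1,3,0,2], ![2,0,3,1], by decide, by decide⟩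

/-- The one-line word of a permutation of `[n] = {1,…,n}`. -/
def permWord {n : ℕ} (σ : Equiv.Perm (Fin n)) : List ℕ :=
  List.ofFn fun i => (σ i : ℕ) + 1

/-- A permutation is separable iff it avoids both 3142 and 2413. -/
def Separable {n : ℕ} (σ : Equiv.Perm (Fin n)) : Prop :=
  ¬ ContainsPattern p3142 (permWord σ) ∧ ¬ ContainsPattern p2413 (permWord σ)

/-- A (strictly) increasing subsequence of the permutation `σ`, as a set of positions. -/
def IncSubseq {n : ℕ} (σ : Equiv.Perm (Fin n)) (S : Finset (Fin n)) : Prop :=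
  ∀ p ∈ S, ∀ q ∈ S, p < q → σ p < σ q

/-- The strict order of the inversion poset of `σ`: `(p, σ p) ≺ (q, σ q)` iff
`p < q` and `σ p < σ q`. -/
def invPrec {n : ℕ} (σ : Equiv.Perm (Fin n)) (p q : Fin n) : Prop :=
  p < q ∧ σ p < σ q

/-
Distinct elements of the inversion poset are incomparable exactly when they form an
inversion, so an induced `N` on `x, a, b, y` is a four-element subsequence in which
`bx`, `ba`, `ya` are the only non-inversions. According to whether `y` stands left or
right of `b`, the positions and values are then forced into an occurrence of 3142
(read as `y b a x`) or of 2413 (read as `b x y a`); conversely each occurrence of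
either pattern is such an `N`.
-/

lemma permWord_length {n : ℕ} (σ : Equiv.Perm (Fin n)) : (permWord σ).length = n :=
  List.length_ofFn

lemma permWord_get {n : ℕ} (σ : Equiv.Perm (Fin n)) (p : Fin (permWord σ).length) :
    (permWord σ).get p = (σ (Fin.cast (permWord_length σ) p) : ℕ) + 1 := by
  rw [List.get_eq_getElem]
  simp only [permWord, List.getElem_ofFn]
  rfl

lemma containsPattern_permWord_iff {m n : ℕ} (π : Equiv.Perm (Fin m)) (σ : Equiv.Perm (Fin n)) :
    ContainsPattern π (permWord σ) ↔
      ∃ i : Fin m → Fin n, StrictMono i ∧ StrictMono (σ ∘ i ∘ π.symm) := by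
  set e := Fin.castOrderIso (permWord_length σ)
  have get_lt (p q) : (permWord σ).get p < (permWord σ).get q ↔ σ (e p) < σ (e q) := by
    simp only [permWord_get, Fin.lt_def, add_lt_add_iff_right]; rfl
  have ordered_like_iff (g : Fin m → Fin n) :
      (∀ j k, g j < g k ↔ π j < π k) ↔ StrictMono (g ∘ π.symm) := by
    refine ⟨fun h a b hab => ?_, fun h j k => ?_⟩
    · simpa [h] using hab
    · simpa using h.lt_iff_lt (a := π j) (b := π k)
  constructor
  · rintro ⟨f, hf, hv⟩
    refine ⟨e ∘ f, e.strictMono.comp hf, (ordered_like_iff (σ ∘ e ∘ f)).1 fun j k => ?_⟩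
    exact (get_lt (f j) (f k)).symm.trans (hv j k).1
  · rintro ⟨i, hi, hv⟩
    have hv := (ordered_like_iff (σ ∘ i)).2 hv
    refine ⟨e.symm ∘ i, e.symm.strictMono.comp hi, fun j k => ?_⟩
    simp only [Function.comp_apply, get_lt, OrderIso.apply_symm_apply]
    exact ⟨hv j k, hv k j⟩

lemma containsPattern_p3142_iff {n : ℕ} (σ : Equiv.Perm (Fin n)) :
    ContainsPattern p3142 (permWord σ) ↔
      ∃ q₀ q₁ q₂ q₃ : Fin n, q₀ < q₁ ∧ q₁ < q₂ ∧ q₂ < q₃ ∧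
        σ q₁ < σ q₃ ∧ σ q₃ < σ q₀ ∧ σ q₀ < σ q₂ := by
  rw [containsPattern_permWord_iff]
  constructor
  · rintro ⟨i, hi, hv⟩
    exact ⟨i 0, i 1, i 2, i 3, hi (by decide), hi (by decide), hi (by decide),
      hv (show (0 : Fin 4) < 1 by decide), hv (show (1 : Fin 4) < 2 by decide),
      hv (show (2 : Fin 4) < 3 by decide)⟩
  · rintro ⟨q₀, q₁, q₂, q₃, h₀₁, h₁₂, h₂₃, v₁₃, v₃₀, v₀₂⟩
    refine ⟨![q₀, q₁, q₂, q₃], ?_, ?_⟩ <;>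
      simp [Fin.strictMono_iff_lt_succ, Fin.forall_fin_succ, p3142, *]

lemma containsPattern_p2413_iff {n : ℕ} (σ : Equiv.Perm (Fin n)) :
    ContainsPattern p2413 (permWord σ) ↔
      ∃ q₀ q₁ q₂ q₃ : Fin n, q₀ < q₁ ∧ q₁ < q₂ ∧ q₂ < q₃ ∧
        σ q₂ < σ q₀ ∧ σ q₀ < σ q₃ ∧ σ q₃ < σ q₁ := by
  rw [containsPattern_permWord_iff]
  constructor
  · rintro ⟨i, hi, hv⟩
    exact ⟨i 0, i 1, i 2, i 3, hi (by decide), hi (by decide), hi (by decide),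
      hv (show (0 : Fin 4) < 1 by decide), hv (show (1 : Fin 4) < 2 by decide),
      hv (show (2 : Fin 4) < 3 by decide)⟩
  · rintro ⟨q₀, q₁, q₂, q₃, h₀₁, h₁₂, h₂₃, v₂₀, v₀₃, v₃₁⟩
    refine ⟨![q₀, q₁, q₂, q₃], ?_, ?_⟩ <;>
      simp [Fin.strictMono_iff_lt_succ, Fin.forall_fin_succ, p2413, *]

def InducesN {n : ℕ} (σ : Equiv.Perm (Fin n)) (x a b y : Fin n) : Prop :=
  invPrec σ b x ∧ invPrec σ b a ∧ invPrec σ y a ∧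
    ¬ invPrec σ x a ∧ ¬ invPrec σ a x ∧
    ¬ invPrec σ b y ∧ ¬ invPrec σ y b ∧
    ¬ invPrec σ x y ∧ ¬ invPrec σ y x

lemma containsPattern_of_inducesN {n : ℕ} {σ : Equiv.Perm (Fin n)} {x a b y : Fin n}
    (h : InducesN σ x a b y) :
    ContainsPattern p3142 (permWord σ) ∨ ContainsPattern p2413 (permWord σ) := by
  rw [containsPattern_p3142_iff, containsPattern_p2413_iff]
  simp only [InducesN, invPrec] at h
  have inj_xa := σ.injective.eq_iff (a := x) (b := a)
  have inj_by := σ.injective.eq_iff (a := b) (b := y)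
  have inj_xy := σ.injective.eq_iff (a := x) (b := y)
  rcases lt_or_gt_of_ne (show y ≠ b by omega) with hyb | hby
  · exact Or.inl ⟨y, b, a, x, by omega, by omega, by omega, by omega, by omega, by omega⟩
  · exact Or.inr ⟨b, x, y, a, by omega, by omega, by omega, by omega, by omega, by omega⟩

lemma exists_inducesN_of_containsPattern_p3142 {n : ℕ} {σ : Equiv.Perm (Fin n)}
    (h : ContainsPattern p3142 (permWord σ)) : ∃ x a b y, InducesN σ x a b y := by
  obtain ⟨q₀, q₁, q₂, q₃, hq⟩ := (containsPattern_p3142_iff σ).1 h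
  exact ⟨q₃, q₂, q₁, q₀, by simp only [InducesN, invPrec]; omega⟩

lemma exists_inducesN_of_containsPattern_p2413 {n : ℕ} {σ : Equiv.Perm (Fin n)}
    (h : ContainsPattern p2413 (permWord σ)) : ∃ x a b y, InducesN σ x a b y := by
  obtain ⟨q₀, q₁, q₂, q₃, hq⟩ := (containsPattern_p2413_iff σ).1 h
  exact ⟨q₁, q₃, q₀, q₂, by simp only [InducesN, invPrec]; omega⟩

/-- A permutation is separable iff its inversion poset has no induced subposet
isomorphic to the poset `N` with elements `{x, a, b, y}` whose only strict
relations are `b ≺ x`, `b ≺ a`, `y ≺ a`. -/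
theorem separable_iff_no_N_subposet {n : ℕ} (σ : Equiv.Perm (Fin n)) :
    Separable σ ↔
      ¬ ∃ x a b y : Fin n,
        invPrec σ b x ∧ invPrec σ b a ∧ invPrec σ y a ∧
        ¬ invPrec σ x a ∧ ¬ invPrec σ a x ∧
        ¬ invPrec σ b y ∧ ¬ invPrec σ y b ∧
        ¬ invPrec σ x y ∧ ¬ invPrec σ y x := by
  constructor
  · rintro ⟨h3142, h2413⟩ ⟨x, a, b, y, hN⟩
    exact (containsPattern_of_inducesN hN).elim h3142 h2413
  · intro hN
    exact ⟨fun h => hN (exists_inducesN_of_containsPattern_p3142 h),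
      fun h => hN (exists_inducesN_of_containsPattern_p2413 h)⟩
end

section
/- Let σ be a separable permutation and let u, w, w′ be increasing subsequences of σ with w and w′ disjoint. Then there exist two disjoint increasing subsequences α and β of σ such that α ∪ β = w ∪ w′ (as sets of positions/entries) and α ∩ u = ∅. -/
/-!
Inside `T = w ∪ w'` the inversion graph of `σ` is bipartite with sides `w` and `w'`, and
separability makes it `P₄`-free: an induced inverted path `a b c d` would be a 2413 or a 3142.
Hence every inversion component of `T` is complete bipartite, and the increasing (hence
inversion-free) `u` meets each component on one side only. Let `β` be the `w`-side of every
component, except the components meeting `u` inside `w'`, where it is the `w'`-side. Then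
`α = T \ β` avoids `u`, and both are increasing because each is a union of whole sides of
components.
-/

open Finset

section Patterns

variable {n : ℕ} (σ : Equiv.Perm (Fin n))

lemma containsPattern_permWord {m : ℕ} (π : Equiv.Perm (Fin m)) (f : Fin m → Fin n)
    (hf : StrictMono f) (hσf : StrictMono (σ ∘ f ∘ π.symm)) :
    ContainsPattern π (permWord σ) := by
  have hlen : (permWord σ).length = n := List.length_ofFn
  have hget : ∀ i, (permWord σ).get (Fin.cast hlen.symm i) = (σ i : ℕ) + 1 := fun i => by
    simp [permWord]; rfl
  have hσ : ∀ j k, σ (f j) < σ (f k) ↔ π j < π k := fun j k => by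
    simpa using hσf.lt_iff_lt (a := π j) (b := π k)
  refine ⟨Fin.cast hlen.symm ∘ f, fun j k hjk => by simpa using hf hjk, fun j k => ?_⟩
  simp only [Function.comp_apply, hget, add_lt_add_iff_right, Fin.val_fin_lt, hσ, and_self]

lemma containsPattern_p2413 (q₁ q₂ q₃ q₄ : Fin n) (hq : q₁ < q₂ ∧ q₂ < q₃ ∧ q₃ < q₄)
    (hσq : σ q₃ < σ q₁ ∧ σ q₁ < σ q₄ ∧ σ q₄ < σ q₂) : ContainsPattern p2413 (permWord σ) := by
  refine containsPattern_permWord σ _ ![q₁, q₂, q₃, q₄] ?_ ?_ <;>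
    simp [Fin.strictMono_iff_lt_succ, Fin.forall_fin_succ, p2413, hq, hσq]

lemma containsPattern_p3142 (q₁ q₂ q₃ q₄ : Fin n) (hq : q₁ < q₂ ∧ q₂ < q₃ ∧ q₃ < q₄)
    (hσq : σ q₂ < σ q₄ ∧ σ q₄ < σ q₁ ∧ σ q₁ < σ q₃) : ContainsPattern p3142 (permWord σ) := by
  refine containsPattern_permWord σ _ ![q₁, q₂, q₃, q₄] ?_ ?_ <;>
    simp [Fin.strictMono_iff_lt_succ, Fin.forall_fin_succ, p3142, hq, hσq]

end Patterns

section Inversions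

variable {n : ℕ} {σ : Equiv.Perm (Fin n)}

variable (σ) in
def Inverted (p q : Fin n) : Prop := (p < q ∧ σ q < σ p) ∨ (q < p ∧ σ p < σ q)

lemma Inverted.symm {p q : Fin n} (h : Inverted σ p q) : Inverted σ q p := Or.symm h

lemma incSubseq_iff_forall_not_inverted {S : Finset (Fin n)} :
    IncSubseq σ S ↔ ∀ p ∈ S, ∀ q ∈ S, ¬ Inverted σ p q := by
  refine ⟨?_, fun hS p hp q hq hpq => ?_⟩
  · rintro hS p hp q hq (⟨hpq, hσ⟩ | ⟨hqp, hσ⟩)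
    · exact (hS p hp q hq hpq).asymm hσ
    · exact (hS q hq p hp hqp).asymm hσ
  · by_contra hσ
    exact hS p hp q hq (Or.inl ⟨hpq, (not_lt.mp hσ).lt_of_ne (σ.injective.ne hpq.ne')⟩)

lemma IncSubseq.mono {S T : Finset (Fin n)} (hS : IncSubseq σ S) (hTS : T ⊆ S) :
    IncSubseq σ T :=
  fun p hp q hq => hS p (hTS hp) q (hTS hq)

/-- Otherwise the four points would form a 2413 or a 3142. -/
theorem Separable.inverted_of_path (hσ : Separable σ) {a b c d : Fin n}
    (hab : Inverted σ a b) (hbc : Inverted σ b c) (hcd : Inverted σ c d)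
    (hac : ¬ Inverted σ a c) (hbd : ¬ Inverted σ b d) : Inverted σ a d := by
  by_contra had
  have hac' : a ≠ c := by rintro rfl; exact had hcd
  have hbd' : b ≠ d := by rintro rfl; exact had hab
  have had' : a ≠ d := by rintro rfl; exact hac hcd.symm
  have := σ.injective.ne hac'
  have := σ.injective.ne hbd'
  have := σ.injective.ne had'
  unfold Inverted at *
  rcases hab with hab | hab <;> rcases hbc with hbc | hbc <;> rcases hcd with hcd | hcd <;>
    rcases hac'.lt_or_gt with hac_lt | hca_lt <;>
    first
    | omega
    | exact hσ.2 (containsPattern_p2413 σ a c b d (by omega) (by omega))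
    | exact hσ.2 (containsPattern_p2413 σ d b c a (by omega) (by omega))
    | exact hσ.1 (containsPattern_p3142 σ b a d c (by omega) (by omega))
    | exact hσ.1 (containsPattern_p3142 σ c d a b (by omega) (by omega))

end Inversions

section TwoChains

variable {n : ℕ} {σ : Equiv.Perm (Fin n)} {w w' : Finset (Fin n)}

lemma mem_iff_notMem_of_inverted (hw : IncSubseq σ w) (hw' : IncSubseq σ w') {p q : Fin n}
    (hp : p ∈ w ∪ w') (hq : q ∈ w ∪ w') (hpq : Inverted σ p q) : p ∈ w ↔ q ∉ w := by
  rw [incSubseq_iff_forall_not_inverted] at hw hw'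
  rw [mem_union] at hp hq
  refine ⟨fun hpw hqw => hw p hpw q hqw hpq, fun hqw => ?_⟩
  by_contra hpw
  exact hw' p (hp.resolve_left hpw) q (hq.resolve_left hqw) hpq

lemma not_inverted_of_inverted_of_inverted (hw : IncSubseq σ w) (hw' : IncSubseq σ w')
    {a b c : Fin n} (ha : a ∈ w ∪ w') (hb : b ∈ w ∪ w') (hc : c ∈ w ∪ w')
    (hab : Inverted σ a b) (hbc : Inverted σ b c) : ¬ Inverted σ a c := fun hac => by
  have := mem_iff_notMem_of_inverted hw hw' ha hb hab
  have := mem_iff_notMem_of_inverted hw hw' hb hc hbc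
  have := mem_iff_notMem_of_inverted hw hw' ha hc hac
  tauto

lemma Separable.inverted_of_path_of_mem_union (hσ : Separable σ) (hw : IncSubseq σ w)
    (hw' : IncSubseq σ w') {a b c d : Fin n} (ha : a ∈ w ∪ w') (hb : b ∈ w ∪ w')
    (hc : c ∈ w ∪ w') (hd : d ∈ w ∪ w')
    (hab : Inverted σ a b) (hbc : Inverted σ b c) (hcd : Inverted σ c d) : Inverted σ a d :=
  hσ.inverted_of_path hab hbc hcd (not_inverted_of_inverted_of_inverted hw hw' ha hb hc hab hbc)
    (not_inverted_of_inverted_of_inverted hw hw' hb hc hd hbc hcd)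

variable (σ) in
def InvDistLETwo (T : Finset (Fin n)) (p q : Fin n) : Prop :=
  p = q ∨ Inverted σ p q ∨ ∃ z ∈ T, Inverted σ p z ∧ Inverted σ z q

lemma InvDistLETwo.of_inverted (hσ : Separable σ) (hw : IncSubseq σ w) (hw' : IncSubseq σ w')
    {p q c : Fin n} (hp : p ∈ w ∪ w') (hq : q ∈ w ∪ w') (hc : c ∈ w ∪ w')
    (hpq : Inverted σ p q) (hqc : InvDistLETwo σ (w ∪ w') q c) :
    InvDistLETwo σ (w ∪ w') p c := by
  rcases hqc with rfl | hqc | ⟨z, hz, hqz, hzc⟩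
  · exact Or.inr (Or.inl hpq)
  · exact Or.inr (Or.inr ⟨q, hq, hpq, hqc⟩)
  · exact Or.inr (Or.inl (hσ.inverted_of_path_of_mem_union hw hw' hp hq hz hc hpq hqz hzc))

variable (σ) in
open scoped Classical in
/-- For `T = w ∪ w'` the inversion components of `T` have diameter at most two
(`InvDistLETwo.of_inverted`), so this is the union of the components of `T` meeting `C`. -/
noncomputable def invBallTwo (T C : Finset (Fin n)) : Finset (Fin n) :=
  {x ∈ T | ∃ c ∈ C, InvDistLETwo σ T x c}

open scoped Classical in
lemma mem_invBallTwo {T C : Finset (Fin n)} {x : Fin n} :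
    x ∈ invBallTwo σ T C ↔ x ∈ T ∧ ∃ c ∈ C, InvDistLETwo σ T x c :=
  mem_filter

lemma subset_invBallTwo {T C : Finset (Fin n)} (hCT : C ⊆ T) : C ⊆ invBallTwo σ T C :=
  fun c hc => mem_invBallTwo.mpr ⟨hCT hc, c, hc, Or.inl rfl⟩

lemma mem_invBallTwo_of_inverted (hσ : Separable σ) (hw : IncSubseq σ w) (hw' : IncSubseq σ w')
    {C : Finset (Fin n)} (hC : C ⊆ w ∪ w') {p q : Fin n} (hp : p ∈ w ∪ w') (hq : q ∈ w ∪ w')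
    (hpq : Inverted σ p q) (hqC : q ∈ invBallTwo σ (w ∪ w') C) :
    p ∈ invBallTwo σ (w ∪ w') C := by
  obtain ⟨-, c, hc, hqc⟩ := mem_invBallTwo.mp hqC
  exact mem_invBallTwo.mpr ⟨hp, c, hc, hqc.of_inverted hσ hw hw' hp hq (hC hc) hpq⟩

lemma notMem_of_mem_invBallTwo {u : Finset (Fin n)} (hu : IncSubseq σ u) (hw : IncSubseq σ w)
    (hw' : IncSubseq σ w') {x : Fin n} (hxw : x ∈ w) (hxw' : x ∉ w')
    (hxF : x ∈ invBallTwo σ (w ∪ w') (u ∩ w')) : x ∉ u := fun hxu => by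
  obtain ⟨-, c, hc, hxc⟩ := mem_invBallTwo.mp hxF
  rw [mem_inter] at hc
  rcases hxc with rfl | hxc | ⟨z, hz, hxz, hzc⟩
  · exact hxw' hc.2
  · exact incSubseq_iff_forall_not_inverted.mp hu x hxu c hc.1 hxc
  · have hzw : z ∉ w := (mem_iff_notMem_of_inverted hw hw' (mem_union_left _ hxw) hz hxz).mp hxw
    exact incSubseq_iff_forall_not_inverted.mp hw' z ((mem_union.mp hz).resolve_left hzw) c hc.2
      hzc

lemma incSubseq_sdiff_union_inter (hw : IncSubseq σ w) (hw' : IncSubseq σ w')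
    {F : Finset (Fin n)}
    (hF : ∀ p ∈ w ∪ w', ∀ q ∈ w ∪ w', Inverted σ p q → q ∈ F → p ∈ F) :
    IncSubseq σ (w' \ F ∪ w ∩ F) := by
  rw [incSubseq_iff_forall_not_inverted] at hw hw' ⊢
  intro p hp q hq hpq
  simp only [mem_union, mem_sdiff, mem_inter] at hp hq
  rcases hp with ⟨hpw', hpF⟩ | ⟨hpw, hpF⟩ <;> rcases hq with ⟨hqw', hqF⟩ | ⟨hqw, hqF⟩
  · exact hw' p hpw' q hqw' hpq
  · exact hpF (hF p (mem_union_right _ hpw') q (mem_union_left _ hqw) hpq hqF)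
  · exact hqF (hF q (mem_union_right _ hqw') p (mem_union_left _ hpw) hpq.symm hpF)
  · exact hw p hpw q hqw hpq

end TwoChains

theorem exists_redecomposition_avoiding_general {n : ℕ} (σ : Equiv.Perm (Fin n))
    (hsep : Separable σ) (u w w' : Finset (Fin n))
    (hu : IncSubseq σ u) (hw : IncSubseq σ w) (hw' : IncSubseq σ w') :
    ∃ α β : Finset (Fin n), IncSubseq σ α ∧ IncSubseq σ β ∧
      Disjoint α β ∧ α ∪ β = w ∪ w' ∧ α ∩ u = ∅ := by
  have huw' : u ∩ w' ⊆ w ∪ w' := inter_subset_right.trans subset_union_right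
  set F := invBallTwo σ (w ∪ w') (u ∩ w')
  have hF : ∀ p ∈ w ∪ w', ∀ q ∈ w ∪ w', Inverted σ p q → q ∈ F → p ∈ F :=
    fun p hp q hq => mem_invBallTwo_of_inverted hsep hw hw' huw' hp hq
  set β := w \ F ∪ w' ∩ F
  have hα : (w ∪ w') \ β ⊆ w' \ F ∪ w ∩ F := by
    intro x; simp only [β, mem_union, mem_sdiff, mem_inter]; tauto
  refine ⟨(w ∪ w') \ β, β, (incSubseq_sdiff_union_inter hw hw' hF).mono hα,
    incSubseq_sdiff_union_inter hw' hw (by rwa [union_comm]), sdiff_disjoint,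
    sdiff_union_of_subset ?_, eq_empty_of_forall_notMem fun x hx => ?_⟩
  · intro x; simp only [β, mem_union, mem_sdiff, mem_inter]; tauto
  have hxF : x ∈ u → x ∈ w' → x ∈ F := fun hxu hxw' =>
    subset_invBallTwo huw' (mem_inter.mpr ⟨hxu, hxw'⟩)
  have hxu : x ∈ w → x ∉ w' → x ∈ F → x ∉ u := notMem_of_mem_invBallTwo hu hw hw'
  simp only [β, mem_inter, mem_union, mem_sdiff] at hx
  tauto

/-- Lemma: if `u`, `w`, `w'` are increasing subsequences of a separable permutation
`σ` with `w` and `w'` disjoint, then `w ∪ w'` can be redecomposed into two disjoint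
increasing subsequences `α` and `β` with `α ∩ u = ∅`. -/
theorem exists_redecomposition_avoiding {n : ℕ} (σ : Equiv.Perm (Fin n))
    (hsep : Separable σ) (u w w' : Finset (Fin n))
    (hu : IncSubseq σ u) (hw : IncSubseq σ w) (hw' : IncSubseq σ w')
    (hdisj : Disjoint w w') :
    ∃ α β : Finset (Fin n), IncSubseq σ α ∧ IncSubseq σ β ∧
      Disjoint α β ∧ α ∪ β = w ∪ w' ∧ α ∩ u = ∅ :=
  exists_redecomposition_avoiding_general σ hsep u w w' hu hw hw'
end

section
/- Let λ be a partition of n and let T be the superstandard tableau of shape λ. Then the reading word rw(T) is a permutation of [n] that avoids the pattern 213. -/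
/-- `superRW l s` is the reading word (rows left to right, bottom row first) of the
superstandard tableau whose row lengths are given by `l`, with entries shifted by
the offset `s`; row `i` (from the top) contains the consecutive integers
`s + l₁ + ⋯ + l_{i-1} + 1, …, s + l₁ + ⋯ + l_i`. -/
def superRW : List ℕ → ℕ → List ℕ
  | [], _ => []
  | r :: rest, s => superRW rest (s + r) ++ List.range' (s + 1) r

/-- The pattern 213 (one-line notation), 0-indexed. -/
def p213 : Equiv.Perm (Fin 3) := ⟨![1,0,2], ![1,0,2], by decide, by decide⟩

/-!
Each row of a superstandard tableau is an increasing run of consecutive integers, and every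
row holds smaller entries than all rows below it. Since the reading word starts from the bottom
row, it is a skew sum of increasing runs: in an occurrence `b a c` of 213 the later letter `c`
exceeds `b`, which forces `b` and `c` into the same run; then `a` lies between them in that
increasing run, contradicting `a < b`.
-/

def Contains213 {α : Type*} [LT α] (w : List α) : Prop :=
  ∃ a b c, [b, a, c].Sublist w ∧ a < b ∧ b < c

theorem contains213_of_containsPattern {w : List ℕ} (h : ContainsPattern p213 w) :
    Contains213 w := by
  obtain ⟨f, hf, hcmp⟩ := h
  refine ⟨w.get (f 1), w.get (f 0), w.get (f 2), ?_, (hcmp 1 0).1.2 (by decide),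
    (hcmp 0 2).1.2 (by decide)⟩
  refine List.sublist_iff_exists_fin_orderEmbedding_get_eq.2
    ⟨OrderEmbedding.ofStrictMono f hf, fun i => ?_⟩
  fin_cases i <;> rfl

theorem not_contains213_append {α : Type*} [Preorder α] {B A : List α}
    (hB : ¬ Contains213 B) (hA : A.Pairwise (· ≤ ·)) (hBA : ∀ b ∈ B, ∀ a ∈ A, a < b) :
    ¬ Contains213 (B ++ A) := by
  rintro ⟨a, b, c, hsub, hab, hbc⟩
  obtain ⟨l₁, l₂, hsplit, h₁, h₂⟩ := List.sublist_append_iff.1 hsub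
  rcases l₁ with _ | ⟨x, _ | ⟨y, _ | ⟨z, _ | ⟨t, l₁⟩⟩⟩⟩
  all_goals simp only [List.nil_append, List.cons_append, List.cons.injEq] at hsplit
  · subst hsplit
    have hsorted : (b ≤ a ∧ b ≤ c) ∧ a ≤ c := by simpa using hA.sublist h₂
    exact hab.not_ge hsorted.1.1
  · obtain ⟨rfl, rfl⟩ := hsplit
    exact hbc.asymm (hBA b (h₁.subset (by simp)) c (h₂.subset (by simp)))
  · obtain ⟨rfl, -, rfl⟩ := hsplit
    exact hbc.asymm (hBA b (h₁.subset (by simp)) c (h₂.subset (by simp)))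
  · obtain ⟨rfl, rfl, rfl, -⟩ := hsplit
    exact hB ⟨a, b, c, h₁, hab, hbc⟩
  · exact List.cons_ne_nil _ _ hsplit.2.2.2.symm

open List in
theorem superRW_perm (l : List ℕ) (s : ℕ) : (superRW l s).Perm (List.range' (s + 1) l.sum) := by
  induction l generalizing s with
  | nil => simp [superRW]
  | cons r rest ih =>
    calc superRW (r :: rest) s
        ~ List.range' (s + r + 1) rest.sum ++ List.range' (s + 1) r := (ih (s + r)).append_right _
      _ ~ List.range' (s + 1) r ++ List.range' (s + 1 + r) rest.sum := by
          rw [Nat.add_right_comm]; exact List.perm_append_comm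
      _ = List.range' (s + 1) (r :: rest).sum := by
          rw [List.sum_cons, List.range'_append_1]

theorem lt_of_mem_superRW {l : List ℕ} {s x : ℕ} (hx : x ∈ superRW l s) : s < x :=
  (List.mem_range'_1.1 ((superRW_perm l s).mem_iff.1 hx)).1

theorem not_contains213_superRW (l : List ℕ) (s : ℕ) : ¬ Contains213 (superRW l s) := by
  induction l generalizing s with
  | nil => rintro ⟨a, b, c, h, -⟩; simp [superRW] at h
  | cons r rest ih =>
    refine not_contains213_append (ih (s + r)) ?_ fun b hb a ha => ?_
    · exact List.pairwise_le_range'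
    · have hsb := lt_of_mem_superRW hb
      have has := List.mem_range'_1.1 ha
      omega

theorem superstandard_readingWord_avoids_213_general (n : ℕ) (l : List ℕ) (hsum : l.sum = n) :
    (superRW l 0).Perm (List.range' 1 n) ∧ ¬ ContainsPattern p213 (superRW l 0) :=
  ⟨hsum ▸ superRW_perm l 0,
    fun h => not_contains213_superRW l 0 (contains213_of_containsPattern h)⟩

/-- The reading word of the superstandard tableau of shape `λ ⊢ n` is a permutation
of `[n] = {1, …, n}` avoiding the pattern 213. -/
theorem superstandard_readingWord_avoids_213 (n : ℕ) (l : List ℕ)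
    (hsort : l.Pairwise (· ≥ ·)) (hpos : ∀ x ∈ l, 0 < x) (hsum : l.sum = n) :
    (superRW l 0).Perm (List.range' 1 n) ∧ ¬ ContainsPattern p213 (superRW l 0) :=
  superstandard_readingWord_avoids_213_general n l hsum
end

section
/- Let B = {σ_1, …, σ_k} be a finite set of separable permutations in S_n, and let w be a supersequence of B (i.e., every σ_i is a subsequence of w). Then shape(w) contains the union of the Ferrers diagrams of shape(σ_1), …, shape(σ_k); in particular, the length of w is at least |⋃_{i=1}^k shape(σ_i)|, the number of cells in the union of these Ferrers diagrams. -/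
/-!
Read through Greene's invariants, the claim is that every increment
`greene u (k + 1) - greene u k` of a separable word `u` is at most the same increment for any
supersequence `w`: given `k` chains of `w`, we must find one more chain of `w`, disjoint from
them, at least as long as the increment of `u`. A separable `u` is a direct or a skew sum of two
smaller separable words, which sit in `w` inside two boxes placed lower-left/upper-right,
respectively upper-left/lower-right; we recurse into the boxes. For a direct sum the two chains
found concatenate. For a skew sum no chain of `w` enters both boxes and no chain of `u` meets both
pieces, so both the `k` given chains and an optimal family of `k + 1` chains of `u` split between
the pieces, and one piece receives fewer given chains than chains of `u`.
-/
open Finset Function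

section ChainCover

variable {α : Type*} (r : α → α → Prop)

structure IsChainFamily {ι : Type*} (s : Finset α) (S : ι → Finset α) : Prop where
  subset : ∀ i, S i ⊆ s
  isChain : ∀ i, IsChain r (S i : Set α)
  pairwise_disjoint : Pairwise (Disjoint on S)

noncomputable def chainCover (s : Finset α) (d : ℕ) : ℕ :=
  sSup ((fun S : Fin d → Finset α => ∑ i, (S i).card) '' {S | IsChainFamily r s S})

variable {r} {s s₁ s₂ : Finset α} {d : ℕ}

theorem IsChainFamily.sum_card_le {ι : Type*} [Fintype ι] {S : ι → Finset α}
    (hS : IsChainFamily r s S) : ∑ i, (S i).card ≤ s.card := by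
  classical
  rw [← card_biUnion fun i _ j _ hij => hS.pairwise_disjoint hij]
  exact card_le_card (biUnion_subset.2 fun i _ => hS.subset i)

theorem bddAbove_chainCover (r : α → α → Prop) (s : Finset α) (d : ℕ) :
    BddAbove ((fun S : Fin d → Finset α => ∑ i, (S i).card) '' {S | IsChainFamily r s S}) :=
  ⟨s.card, by rintro _ ⟨S, hS, rfl⟩; exact hS.sum_card_le⟩

theorem IsChainFamily.sum_card_le_chainCover {S : Fin d → Finset α}
    (hS : IsChainFamily r s S) : ∑ i, (S i).card ≤ chainCover r s d :=
  le_csSup (bddAbove_chainCover r s d) ⟨S, hS, rfl⟩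

theorem exists_isChainFamily_chainCover_eq (r : α → α → Prop) (s : Finset α) (d : ℕ) :
    ∃ S : Fin d → Finset α, IsChainFamily r s S ∧ chainCover r s d = ∑ i, (S i).card := by
  have hne :
      ((fun S : Fin d → Finset α => ∑ i, (S i).card) '' {S | IsChainFamily r s S}).Nonempty :=
    ⟨0, fun _ => ∅, ⟨fun _ => empty_subset s, fun _ => by simp, fun _ _ _ => disjoint_bot_left⟩,
      by simp⟩
  obtain ⟨S, hS, hsum⟩ := Nat.sSup_mem hne (bddAbove_chainCover r s d)
  exact ⟨S, hS, hsum.symm⟩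

theorem chainCover_le_card : chainCover r s d ≤ s.card := by
  obtain ⟨S, hS, hsum⟩ := exists_isChainFamily_chainCover_eq r s d
  exact hsum ▸ hS.sum_card_le

theorem chainCover_add_le (h₁ : s₁ ⊆ s) (h₂ : s₂ ⊆ s) (hdisj : Disjoint s₁ s₂) (a b : ℕ) :
    chainCover r s₁ a + chainCover r s₂ b ≤ chainCover r s (a + b) := by
  obtain ⟨S₁, hS₁, hsum₁⟩ := exists_isChainFamily_chainCover_eq r s₁ a
  obtain ⟨S₂, hS₂, hsum₂⟩ := exists_isChainFamily_chainCover_eq r s₂ b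
  have hS : IsChainFamily r s (Fin.append S₁ S₂) := by
    refine ⟨fun i => ?_, fun i => ?_, fun i j hij => ?_⟩
    · induction i using Fin.addCases <;> simp only [Fin.append_left, Fin.append_right]
      exacts [(hS₁.subset _).trans h₁, (hS₂.subset _).trans h₂]
    · induction i using Fin.addCases <;> simp only [Fin.append_left, Fin.append_right]
      exacts [hS₁.isChain _, hS₂.isChain _]
    · induction i using Fin.addCases <;> induction j using Fin.addCases <;>
        simp only [onFun, Fin.append_left, Fin.append_right] at hij ⊢
      · exact hS₁.pairwise_disjoint fun h => hij (by rw [h])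
      · exact hdisj.mono (hS₁.subset _) (hS₂.subset _)
      · exact hdisj.symm.mono (hS₂.subset _) (hS₁.subset _)
      · exact hS₂.pairwise_disjoint fun h => hij (by rw [h])
  calc chainCover r s₁ a + chainCover r s₂ b = ∑ i, (Fin.append S₁ S₂ i).card := by
        simp [Fin.sum_univ_add, hsum₁, hsum₂]
    _ ≤ chainCover r s (a + b) := hS.sum_card_le_chainCover

theorem chainCover_mono : Monotone (chainCover r s) := by
  intro a b hab
  obtain ⟨c, rfl⟩ := Nat.exists_eq_add_of_le hab
  exact le_self_add.trans
    (chainCover_add_le subset_rfl (empty_subset s) (disjoint_empty_right s) a c)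

theorem card_le_chainCover {c : Finset α} (hc : IsChain r (c : Set α)) (hcs : c ⊆ s)
    (hd : 0 < d) : c.card ≤ chainCover r s d := by
  have hS : IsChainFamily r s fun _ : Fin 1 => c :=
    ⟨fun _ => hcs, fun _ => hc, fun i j hij => absurd (Subsingleton.elim i j) hij⟩
  simpa using hS.sum_card_le_chainCover.trans (chainCover_mono (Nat.one_le_iff_ne_zero.2 hd.ne'))

theorem chainCover_le_add [DecidableEq α] (hs : s ⊆ s₁ ∪ s₂) :
    chainCover r s d ≤ chainCover r s₁ d + chainCover r s₂ d := by
  obtain ⟨S, hS, hsum⟩ := exists_isChainFamily_chainCover_eq r s d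
  have h₁ : IsChainFamily r s₁ fun i => S i ∩ s₁ :=
    ⟨fun _ => inter_subset_right, fun i => (hS.isChain i).mono (by simp),
      fun i j hij => (hS.pairwise_disjoint hij).mono inter_subset_left inter_subset_left⟩
  have h₂ : IsChainFamily r s₂ fun i => S i \ s₁ :=
    ⟨fun i x hx =>
      (mem_union.1 (hs (hS.subset i (mem_sdiff.1 hx).1))).resolve_left (mem_sdiff.1 hx).2,
     fun i => (hS.isChain i).mono (by simp),
     fun i j hij => (hS.pairwise_disjoint hij).mono sdiff_subset sdiff_subset⟩
  calc chainCover r s d = ∑ i, ((S i ∩ s₁).card + (S i \ s₁).card) := by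
        simp only [card_inter_add_card_sdiff, hsum]
    _ ≤ chainCover r s₁ d + chainCover r s₂ d := by
        rw [sum_add_distrib]
        exact add_le_add h₁.sum_card_le_chainCover h₂.sum_card_le_chainCover

theorem chainCover_add_le_of_forall_rel [DecidableEq α] (h₁ : s₁ ⊆ s) (h₂ : s₂ ⊆ s)
    (hdisj : Disjoint s₁ s₂) (hr : ∀ p ∈ s₁, ∀ q ∈ s₂, r p q) :
    chainCover r s₁ d + chainCover r s₂ d ≤ chainCover r s d := by
  obtain ⟨S₁, hS₁, hsum₁⟩ := exists_isChainFamily_chainCover_eq r s₁ d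
  obtain ⟨S₂, hS₂, hsum₂⟩ := exists_isChainFamily_chainCover_eq r s₂ d
  have hS : IsChainFamily r s fun i => S₁ i ∪ S₂ i := by
    refine ⟨fun i => union_subset ((hS₁.subset i).trans h₁) ((hS₂.subset i).trans h₂), fun i => ?_,
      fun i j hij => ?_⟩
    · rw [coe_union, isChain_union]
      exact ⟨hS₁.isChain i, hS₂.isChain i,
        fun p hp q hq _ => .inl (hr p (hS₁.subset i hp) q (hS₂.subset i hq))⟩
    · simp only [onFun, disjoint_union_left, disjoint_union_right]
      exact ⟨⟨hS₁.pairwise_disjoint hij, hdisj.symm.mono (hS₂.subset i) (hS₁.subset j)⟩,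
        hdisj.mono (hS₁.subset i) (hS₂.subset j), hS₂.pairwise_disjoint hij⟩
  calc chainCover r s₁ d + chainCover r s₂ d = ∑ i, (S₁ i ∪ S₂ i).card := by
        rw [hsum₁, hsum₂, ← sum_add_distrib]
        exact sum_congr rfl fun i _ =>
          (card_union_of_disjoint (hdisj.mono (hS₁.subset i) (hS₂.subset i))).symm
    _ ≤ chainCover r s d := hS.sum_card_le_chainCover

theorem IsChainFamily.sum_card_le_chainCover_card {ι : Type*} {I : Finset ι}
    {S : ι → Finset α} (hS : IsChainFamily r s fun i : I => S i) :
    ∑ i ∈ I, (S i).card ≤ chainCover r s I.card := by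
  have hT : IsChainFamily r s fun j => S (I.equivFin.symm j) :=
    ⟨fun _ => hS.subset _, fun _ => hS.isChain _,
      fun _ _ hij => hS.pairwise_disjoint (I.equivFin.symm.injective.ne hij)⟩
  calc ∑ i ∈ I, (S i).card = ∑ j, (S (I.equivFin.symm j)).card := by
        rw [← sum_coe_sort I, ← I.equivFin.symm.sum_comp]
    _ ≤ chainCover r s I.card := hT.sum_card_le_chainCover

theorem IsChain.subset_or_subset_of_incomparable [DecidableEq α] {c : Finset α}
    (hc : IsChain r (c : Set α)) (hcs : c ⊆ s₁ ∪ s₂)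
    (hinc : ∀ p ∈ s₁, ∀ q ∈ s₂, ¬ r p q ∧ ¬ r q p) : c ⊆ s₁ ∨ c ⊆ s₂ := by
  refine or_iff_not_imp_left.2 fun h₁ y hy => ?_
  obtain ⟨x, hx, hx₁⟩ := not_subset.1 h₁
  have hx₂ : x ∈ s₂ := (mem_union.1 (hcs hx)).resolve_left hx₁
  by_contra hy₂
  have hy₁ : y ∈ s₁ := (mem_union.1 (hcs hy)).resolve_right hy₂
  have hinc := hinc y hy₁ x hx₂
  rcases hc hy hx (by rintro rfl; exact hx₁ hy₁) with h | h
  exacts [hinc.1 h, hinc.2 h]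

theorem exists_chainCover_le_add_of_incomparable [DecidableEq α] (hs : s ⊆ s₁ ∪ s₂)
    (hinc : ∀ p ∈ s₁, ∀ q ∈ s₂, ¬ r p q ∧ ¬ r q p) (d : ℕ) :
    ∃ a b, a + b = d ∧ chainCover r s d ≤ chainCover r s₁ a + chainCover r s₂ b := by
  obtain ⟨S, hS, hsum⟩ := exists_isChainFamily_chainCover_eq r s d
  set I := univ.filter fun i => S i ⊆ s₁
  have hI : IsChainFamily r s₁ fun i : I => S i :=
    ⟨fun i => (mem_filter.1 i.2).2, fun i => hS.isChain i,
      fun i j hij => hS.pairwise_disjoint (Subtype.coe_injective.ne hij)⟩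
  have hIc : IsChainFamily r s₂ fun i : (Iᶜ : Finset (Fin d)) => S i := by
    refine ⟨fun i => ?_, fun i => hS.isChain i,
      fun i j hij => hS.pairwise_disjoint (Subtype.coe_injective.ne hij)⟩
    refine ((hS.isChain i).subset_or_subset_of_incomparable ((hS.subset i).trans hs)
      hinc).resolve_left ?_
    simpa [I] using i.2
  refine ⟨I.card, Iᶜ.card, by simp [card_add_card_compl], ?_⟩
  calc chainCover r s d = ∑ i ∈ I, (S i).card + ∑ i ∈ Iᶜ, (S i).card := by
        rw [hsum, sum_add_sum_compl]
    _ ≤ _ := add_le_add hI.sum_card_le_chainCover_card hIc.sum_card_le_chainCover_card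

theorem IsChainFamily.sum_card_add_card_le {S : Fin d → Finset α} (hS : IsChainFamily r s S)
    {c : Finset α} (hc : IsChain r (c : Set α)) (hcs : c ⊆ s) (hdisj : ∀ i, Disjoint c (S i)) :
    ∑ i, (S i).card + c.card ≤ chainCover r s (d + 1) := by
  classical
  have hU : IsChainFamily r (univ.biUnion S) S :=
    ⟨fun i => subset_biUnion_of_mem S (mem_univ i), hS.isChain, hS.pairwise_disjoint⟩
  calc ∑ i, (S i).card + c.card ≤ chainCover r (univ.biUnion S) d + chainCover r c 1 :=
        add_le_add hU.sum_card_le_chainCover (card_le_chainCover hc subset_rfl one_pos)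
    _ ≤ chainCover r s (d + 1) :=
        chainCover_add_le (biUnion_subset.2 fun i _ => hS.subset i) hcs
          ((disjoint_biUnion_left _ _ _).2 fun i _ => (hdisj i).symm) d 1

theorem card_filter_not_disjoint_mono [DecidableEq α] (F : Finset (Finset α)) {X Y : Finset α}
    (h : X ⊆ Y) :
    (F.filter fun f => ¬ Disjoint f X).card ≤ (F.filter fun f => ¬ Disjoint f Y).card :=
  card_le_card (monotone_filter_right _ fun _ _ hX hY => hX (hY.mono_right h))

theorem card_filter_not_disjoint_add_le_of_incomparable [DecidableEq α] {F : Finset (Finset α)}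
    (hF : ∀ f ∈ F, IsChain r (f : Set α)) {C D R : Finset α} (hC : C ⊆ R) (hD : D ⊆ R)
    (hCD : Disjoint C D) (hinc : ∀ x ∈ C, ∀ y ∈ D, ¬ r x y ∧ ¬ r y x) :
    (F.filter fun f => ¬ Disjoint f C).card + (F.filter fun f => ¬ Disjoint f D).card ≤
      (F.filter fun f => ¬ Disjoint f R).card := by
  rw [← card_union_of_disjoint]
  · exact card_le_card (union_subset (monotone_filter_right _ fun _ _ h h' => h (h'.mono_right hC))
      (monotone_filter_right _ fun _ _ h h' => h (h'.mono_right hD)))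
  refine disjoint_filter.2 fun f hf hfC hfD => ?_
  obtain ⟨x, hxf, hxC⟩ := not_disjoint_iff.1 hfC
  obtain ⟨y, hyf, hyD⟩ := not_disjoint_iff.1 hfD
  have hinc := hinc x hxC y hyD
  rcases hF f hf hxf hyf (fun h => disjoint_left.1 hCD hxC (h ▸ hyD)) with h | h
  exacts [hinc.1 h, hinc.2 h]

end ChainCover

section Splitting

variable {ι β : Type*} [LinearOrder ι] [LinearOrder β] {v : ι → β}

def Avoids3142 (v : ι → β) : Prop :=
  ∀ ⦃a b c d : ι⦄, a < b → b < c → c < d → ¬ (v b < v d ∧ v d < v a ∧ v a < v c)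

def Avoids2413 (v : ι → β) : Prop :=
  ∀ ⦃a b c d : ι⦄, a < b → b < c → c < d → ¬ (v c < v a ∧ v a < v d ∧ v d < v b)

theorem Avoids2413.toDual (h : Avoids2413 v) : Avoids3142 (OrderDual.toDual ∘ v) :=
  fun _ _ _ _ hab hbc hcd ⟨h₁, h₂, h₃⟩ => h hab hbc hcd ⟨h₃, h₂, h₁⟩

def IsDirectSum (v : ι → β) (s₁ s₂ : Finset ι) : Prop :=
  ∀ p ∈ s₁, ∀ q ∈ s₂, p < q ∧ v p < v q

def IsSkewSum (v : ι → β) (s₁ s₂ : Finset ι) : Prop :=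
  ∀ p ∈ s₁, ∀ q ∈ s₂, p < q ∧ v q < v p

def Splits (v : ι → β) (s : Finset ι) : Prop :=
  ∃ s₁ s₂, s₁.Nonempty ∧ s₂.Nonempty ∧ s₁ ∪ s₂ = s ∧ (IsDirectSum v s₁ s₂ ∨ IsSkewSum v s₁ s₂)

theorem IsDirectSum.disjoint {s₁ s₂ : Finset ι} (h : IsDirectSum v s₁ s₂) : Disjoint s₁ s₂ :=
  disjoint_left.2 fun p h₁ h₂ => lt_irrefl p (h p h₁ p h₂).1

theorem IsSkewSum.disjoint {s₁ s₂ : Finset ι} (h : IsSkewSum v s₁ s₂) : Disjoint s₁ s₂ :=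
  disjoint_left.2 fun p h₁ h₂ => lt_irrefl p (h p h₁ p h₂).1

theorem Splits.of_toDual {s : Finset ι} (h : Splits (OrderDual.toDual ∘ v) s) : Splits v s :=
  let ⟨s₁, s₂, h₁, h₂, hs, hd⟩ := h
  ⟨s₁, s₂, h₁, h₂, hs, hd.symm⟩

/-- If some `q < p` had `v p < v a < v q`, then `q`, `p`, any `j ∈ s₂` and `a` would form the
pattern 3142. -/
theorem isDirectSum_filter_lt_filter_not_lt (h3142 : Avoids3142 v) (hv : Injective v)
    {s₁ s₂ : Finset ι} {a p₁ : ι} (ha : ∀ x ∈ s₁ ∪ s₂, x < a) (h₂ : s₂.Nonempty)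
    (hd : IsDirectSum v s₁ s₂) (hp₁ : p₁ ∈ s₁) (hvp₁ : v a < v p₁) :
    IsDirectSum v ((insert a (s₁ ∪ s₂)).filter (v · < v a))
      ((insert a (s₁ ∪ s₂)).filter (¬ v · < v a)) := by
  intro p hp q hq
  simp only [mem_filter, mem_insert, mem_union, not_lt] at hp hq
  obtain ⟨hp | hp | hp, hpa⟩ := hp
  · exact absurd hpa (hp ▸ lt_irrefl _)
  · obtain ⟨hq | hq | hq, haq⟩ := hq
    · exact ⟨hq ▸ ha p (mem_union_left _ hp), hpa.trans_le haq⟩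
    · refine ⟨lt_of_not_ge fun hqp => ?_, hpa.trans_le haq⟩
      obtain ⟨j, hj⟩ := h₂
      have hqp : q < p := hqp.lt_of_ne (hv.ne_iff.1 (hpa.trans_le haq).ne')
      have hvq : v a < v q := haq.lt_of_ne (hv.ne (ha q (mem_union_left _ hq)).ne')
      exact h3142 hqp (hd p hp j hj).1 (ha j (mem_union_right _ hj)) ⟨hpa, hvq, (hd q hq j hj).2⟩
    · exact ⟨(hd p hp q hq).1, hpa.trans_le haq⟩
  · exact absurd ((hvp₁.trans (hd p₁ hp₁ p hp).2).trans hpa) (lt_irrefl _)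

theorem splits_insert_of_isDirectSum (h3142 : Avoids3142 v) (hv : Injective v) {s₁ s₂ : Finset ι}
    {a : ι} (ha : ∀ x ∈ s₁ ∪ s₂, x < a) (h₁ : s₁.Nonempty) (h₂ : s₂.Nonempty)
    (hd : IsDirectSum v s₁ s₂) : Splits v (insert a (s₁ ∪ s₂)) := by
  by_cases hlow : ∀ p ∈ s₁, v p < v a
  · refine ⟨s₁, insert a s₂, h₁, insert_nonempty a s₂, by simp [union_insert], Or.inl ?_⟩
    intro p hp q hq
    rcases mem_insert.1 hq with rfl | hq
    exacts [⟨ha p (mem_union_left _ hp), hlow p hp⟩, hd p hp q hq]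
  obtain ⟨p₁, hp₁, hvp₁⟩ : ∃ p₁ ∈ s₁, v a < v p₁ := by
    push Not at hlow
    obtain ⟨p₁, hp₁, h⟩ := hlow
    exact ⟨p₁, hp₁, h.lt_of_ne (hv.ne (ha p₁ (mem_union_left _ hp₁)).ne')⟩
  by_cases hhigh : ∀ p ∈ s₁, v a < v p
  · refine ⟨s₁ ∪ s₂, {a}, h₁.mono subset_union_left, singleton_nonempty a,
      by rw [union_comm, ← insert_eq], Or.inr ?_⟩
    intro p hp q hq
    rw [mem_singleton.1 hq]
    refine ⟨ha p hp, ?_⟩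
    rcases mem_union.1 hp with hp | hp
    exacts [hhigh p hp, hvp₁.trans (hd p₁ hp₁ p hp).2]
  obtain ⟨p₀, hp₀, hvp₀⟩ : ∃ p₀ ∈ s₁, v p₀ < v a := by
    push Not at hhigh
    obtain ⟨p₀, hp₀, h⟩ := hhigh
    exact ⟨p₀, hp₀, h.lt_of_ne (hv.ne (ha p₀ (mem_union_left _ hp₀)).ne)⟩
  exact ⟨_, _, ⟨p₀, by simp [hp₀, hvp₀]⟩, ⟨a, by simp⟩, filter_union_filter_not_eq _ _,
    Or.inl (isDirectSum_filter_lt_filter_not_lt h3142 hv ha h₂ hd hp₁ hvp₁)⟩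

theorem splits_of_avoids (h3142 : Avoids3142 v) (h2413 : Avoids2413 v) (hv : Injective v)
    {s : Finset ι} (hs : 2 ≤ s.card) : Splits v s := by
  induction s using Finset.induction_on_max with
  | empty => simp at hs
  | insert a s ha ih =>
    have has : a ∉ s := fun h => lt_irrefl a (ha a h)
    rw [card_insert_of_notMem has] at hs
    rcases (Nat.le_of_lt_succ hs).eq_or_lt with hs | hs
    · obtain ⟨x, rfl⟩ := card_eq_one.1 hs.symm
      have hxa : x < a := ha x (mem_singleton_self x)
      refine ⟨{x}, {a}, singleton_nonempty x, singleton_nonempty a, pair_comm x a, ?_⟩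
      simp only [IsDirectSum, IsSkewSum, mem_singleton, forall_eq, hxa, true_and]
      exact lt_or_gt_of_ne (hv.ne hxa.ne)
    obtain ⟨s₁, s₂, h₁, h₂, rfl, hd | hd⟩ := ih hs
    · exact splits_insert_of_isDirectSum h3142 hv ha h₁ h₂ hd
    · exact (splits_insert_of_isDirectSum h2413.toDual (OrderDual.toDual.injective.comp hv)
        ha h₁ h₂ hd).of_toDual

end Splitting

section Lifting

variable {ι κ β : Type*} [LinearOrder ι] [LinearOrder κ] [LinearOrder β]

def WordLE (v : ι → β) (p q : ι) : Prop := p ≤ q ∧ v p ≤ v q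

/-- The `(k+1)`-st row of the shape of `u` restricted to `s` fits into `w`, inside any region `R`
around the image of `s` under `e`, next to any `k` chains of `w` that enter `R`. -/
def LiftsShape (u : ι → β) (w : κ → β) (e : ι → κ) (s : Finset ι) : Prop :=
  ∀ R : Finset κ, (∀ i ∈ s, e i ∈ R) → ∀ (k : ℕ) (F : Finset (Finset κ)),
    (F.filter fun f => ¬ Disjoint f R).card ≤ k → (∀ f ∈ F, IsChain (WordLE w) (f : Set κ)) →
    ∃ c ⊆ R, IsChain (WordLE w) (c : Set κ) ∧ (∀ f ∈ F, Disjoint c f) ∧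
      chainCover (WordLE u) s (k + 1) ≤ chainCover (WordLE u) s k + c.card

variable {u : ι → β} {w : κ → β} {e : ι → κ}

theorem liftsShape_of_card_le_one (he : StrictMono e) {s : Finset ι} (hs : s.card ≤ 1) :
    LiftsShape u w e s := by
  intro R hR k F hF _
  have hchain : IsChain (WordLE u) (s : Set ι) :=
    Set.Subsingleton.isChain fun x hx y hy => card_le_one.1 hs x hx y hy
  rcases k with _ | k
  · refine ⟨s.image e, image_subset_iff.2 hR, ?_, fun f hf => ?_, ?_⟩
    · exact Set.Subsingleton.isChain fun x hx y hy =>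
        card_le_one.1 (card_image_le.trans hs) x hx y hy
    · have hfR : Disjoint f R := by
        by_contra h
        exact (card_pos.2 ⟨f, mem_filter.2 ⟨hf, h⟩⟩).ne' (Nat.le_zero.1 hF)
      exact (hfR.mono_right (image_subset_iff.2 hR)).symm
    · rw [card_image_of_injective _ he.injective]
      exact chainCover_le_card.trans le_add_self
  · refine ⟨∅, empty_subset _, by simp, fun f _ => disjoint_empty_left f, ?_⟩
    simpa using chainCover_le_card.trans (card_le_chainCover hchain subset_rfl k.succ_pos)

theorem LiftsShape.union_of_isDirectSum (he : StrictMono e) (hue : ∀ i, w (e i) = u i)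
    {s₁ s₂ : Finset ι} (h₁ : s₁.Nonempty) (hd : IsDirectSum u s₁ s₂) (l₁ : LiftsShape u w e s₁)
    (l₂ : LiftsShape u w e s₂) : LiftsShape u w e (s₁ ∪ s₂) := by
  intro R hR k F hF hFc
  set t := s₁.sup' h₁ e
  set m := s₁.sup' h₁ u
  set A := R.filter fun p => p ≤ t ∧ w p ≤ m
  set B := R.filter fun p => t < p ∧ m < w p
  have hA : ∀ i ∈ s₁, e i ∈ A := fun i hi => mem_filter.2
    ⟨hR i (mem_union_left _ hi), le_sup' e hi, (hue i).symm ▸ le_sup' u hi⟩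
  have hB : ∀ i ∈ s₂, e i ∈ B := fun i hi => mem_filter.2
    ⟨hR i (mem_union_right _ hi), (sup'_lt_iff h₁).2 fun p hp => he (hd p hp i hi).1,
      (hue i).symm ▸ (sup'_lt_iff h₁).2 fun p hp => (hd p hp i hi).2⟩
  obtain ⟨c₁, hc₁A, hc₁, hc₁F, hk₁⟩ :=
    l₁ A hA k F ((card_filter_not_disjoint_mono F (filter_subset _ _)).trans hF) hFc
  obtain ⟨c₂, hc₂B, hc₂, hc₂F, hk₂⟩ :=
    l₂ B hB k F ((card_filter_not_disjoint_mono F (filter_subset _ _)).trans hF) hFc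
  have hAB : ∀ x ∈ c₁, ∀ y ∈ c₂, x < y ∧ w x ≤ w y := fun x hx y hy =>
    have hx := (mem_filter.1 (hc₁A hx)).2
    have hy := (mem_filter.1 (hc₂B hy)).2
    ⟨hx.1.trans_lt hy.1, hx.2.trans hy.2.le⟩
  have hdisj : Disjoint c₁ c₂ :=
    disjoint_left.2 fun x hx hx' => lt_irrefl x (hAB x hx x hx').1
  refine ⟨c₁ ∪ c₂, union_subset (hc₁A.trans (filter_subset _ _)) (hc₂B.trans (filter_subset _ _)),
    ?_, fun f hf => disjoint_union_left.2 ⟨hc₁F f hf, hc₂F f hf⟩, ?_⟩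
  · rw [coe_union, isChain_union]
    exact ⟨hc₁, hc₂, fun x hx y hy _ => .inl ⟨(hAB x hx y hy).1.le, (hAB x hx y hy).2⟩⟩
  · have hsub := chainCover_le_add (r := WordLE u) (d := k + 1) (subset_refl (s₁ ∪ s₂))
    have hsuper := chainCover_add_le_of_forall_rel (r := WordLE u) (d := k) subset_union_left
      subset_union_right hd.disjoint fun p hp q hq => ⟨(hd p hp q hq).1.le, (hd p hp q hq).2.le⟩
    rw [card_union_of_disjoint hdisj]
    omega

theorem LiftsShape.union_of_isSkewSum (he : StrictMono e) (hue : ∀ i, w (e i) = u i)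
    {s₁ s₂ : Finset ι} (h₁ : s₁.Nonempty) (h₂ : s₂.Nonempty) (hd : IsSkewSum u s₁ s₂)
    (l₁ : LiftsShape u w e s₁) (l₂ : LiftsShape u w e s₂) : LiftsShape u w e (s₁ ∪ s₂) := by
  intro R hR k F hF hFc
  set t := s₁.sup' h₁ e
  set m := s₂.sup' h₂ u
  set C := R.filter fun p => p ≤ t ∧ m < w p
  set D := R.filter fun p => t < p ∧ w p ≤ m
  have hC : ∀ i ∈ s₁, e i ∈ C := fun i hi => mem_filter.2
    ⟨hR i (mem_union_left _ hi), le_sup' e hi,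
      (hue i).symm ▸ (sup'_lt_iff h₂).2 fun q hq => (hd i hi q hq).2⟩
  have hD : ∀ i ∈ s₂, e i ∈ D := fun i hi => mem_filter.2
    ⟨hR i (mem_union_right _ hi), (sup'_lt_iff h₁).2 fun p hp => he (hd p hp i hi).1,
      (hue i).symm ▸ le_sup' u hi⟩
  set FC := F.filter fun f => ¬ Disjoint f C
  set FD := F.filter fun f => ¬ Disjoint f D
  have hFCD : FC.card + FD.card ≤ k := by
    refine (card_filter_not_disjoint_add_le_of_incomparable hFc (filter_subset _ _)
      (filter_subset _ _) ?_ fun x hx y hy => ?_).trans hF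
    · exact disjoint_left.2 fun x hxC hxD =>
        ((mem_filter.1 hxC).2.1.trans_lt (mem_filter.1 hxD).2.1).false
    · have hx := (mem_filter.1 hx).2
      have hy := (mem_filter.1 hy).2
      exact ⟨fun h => not_le.2 (hy.2.trans_lt hx.2) h.2, fun h => not_le.2 (hx.1.trans_lt hy.1) h.1⟩
  obtain ⟨a, b, hab, hsplit⟩ := exists_chainCover_le_add_of_incomparable (r := WordLE u)
    (subset_refl (s₁ ∪ s₂)) (fun p hp q hq => ⟨fun h => not_le.2 (hd p hp q hq).2 h.2,
      fun h => not_le.2 (hd p hp q hq).1 h.1⟩) (k + 1)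
  have hsuper := chainCover_add_le (r := WordLE u) subset_union_left subset_union_right
    hd.disjoint
  rcases (show FC.card < a ∨ FD.card < b by omega) with ha | hb
  · obtain ⟨a, rfl⟩ : ∃ a', a = a' + 1 := ⟨a - 1, by omega⟩
    obtain ⟨c, hcC, hc, hcF, hk⟩ := l₁ C hC a F (Nat.le_of_lt_succ ha) hFc
    refine ⟨c, hcC.trans (filter_subset _ _), hc, hcF, ?_⟩
    obtain rfl : k = a + b := by omega
    have := hsuper a b
    omega
  · obtain ⟨b, rfl⟩ : ∃ b', b = b' + 1 := ⟨b - 1, by omega⟩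
    obtain ⟨c, hcD, hc, hcF, hk⟩ := l₂ D hD b F (Nat.le_of_lt_succ hb) hFc
    refine ⟨c, hcD.trans (filter_subset _ _), hc, hcF, ?_⟩
    obtain rfl : k = a + b := by omega
    have := hsuper a b
    omega

theorem liftsShape_of_avoids (he : StrictMono e) (hue : ∀ i, w (e i) = u i) (hu : Injective u)
    (h3142 : Avoids3142 u) (h2413 : Avoids2413 u) (s : Finset ι) : LiftsShape u w e s := by
  induction s using Finset.strongInduction with
  | H s ih =>
  rcases le_or_gt s.card 1 with hs | hs
  · exact liftsShape_of_card_le_one he hs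
  obtain ⟨s₁, s₂, h₁, h₂, rfl, hd⟩ := splits_of_avoids h3142 h2413 hu hs
  have hdisj : Disjoint s₁ s₂ := hd.elim IsDirectSum.disjoint IsSkewSum.disjoint
  have l₁ := ih s₁ (union_comm s₂ s₁ ▸ hdisj.symm.right_lt_sup_of_left_ne_bot h₂.ne_empty)
  have l₂ := ih s₂ (hdisj.right_lt_sup_of_left_ne_bot h₁.ne_empty)
  rcases hd with hd | hd
  exacts [l₁.union_of_isDirectSum he hue h₁ hd l₂, l₁.union_of_isSkewSum he hue h₁ h₂ hd l₂]

end Lifting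

section Words

theorem wkInc_iff_isChain {w : List ℕ} {S : Finset (Fin w.length)} :
    WkInc w S ↔ IsChain (WordLE w.get) (S : Set (Fin w.length)) := by
  constructor
  · intro h p hp q hq hpq
    rcases lt_or_gt_of_ne hpq with hlt | hlt
    · exact .inl ⟨hlt.le, h p hp q hq hlt⟩
    · exact .inr ⟨hlt.le, h q hq p hp hlt⟩
  · intro h p hp q hq hpq
    rcases h hp hq hpq.ne with h | h
    exacts [h.2, absurd h.1 (not_le.2 hpq)]

theorem greene_eq_chainCover (w : List ℕ) (d : ℕ) :
    greene w d = chainCover (WordLE w.get) univ d := by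
  unfold greene chainCover
  congr 1
  ext N
  refine exists_congr fun S => ⟨fun ⟨hS, hdisj, hN⟩ => ⟨?_, hN.symm⟩, fun ⟨hS, hN⟩ => ?_⟩
  · exact ⟨fun _ => subset_univ _, fun i => wkInc_iff_isChain.1 (hS i), fun i j => hdisj i j⟩
  · exact ⟨fun i => wkInc_iff_isChain.2 (hS.isChain i), fun i j hij => hS.pairwise_disjoint hij,
      hN.symm⟩

theorem containsPattern_of_lt_iff {m : ℕ} {π : Equiv.Perm (Fin m)} {u : List ℕ}
    (f : Fin m → Fin u.length) (hf : StrictMono f)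
    (h : ∀ j k, u.get (f j) < u.get (f k) ↔ π j < π k) : ContainsPattern π u :=
  ⟨f, hf, fun j k => ⟨h j k, h k j⟩⟩

theorem strictMono_vecCons₄ {α : Type*} [Preorder α] {a b c d : α} (hab : a < b) (hbc : b < c)
    (hcd : c < d) : StrictMono ![a, b, c, d] := by
  refine Fin.strictMono_iff_lt_succ.2 fun i => ?_
  fin_cases i <;> simpa

theorem avoids3142_of_not_containsPattern {u : List ℕ} (h : ¬ ContainsPattern p3142 u) :
    Avoids3142 u.get := by
  intro a b c d hab hbc hcd ⟨h₁, h₂, h₃⟩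
  refine h (containsPattern_of_lt_iff _ (strictMono_vecCons₄ hab hbc hcd) fun j k => ?_)
  fin_cases j <;> fin_cases k <;> simp [p3142] at h₁ h₂ h₃ ⊢ <;> omega

theorem avoids2413_of_not_containsPattern {u : List ℕ} (h : ¬ ContainsPattern p2413 u) :
    Avoids2413 u.get := by
  intro a b c d hab hbc hcd ⟨h₁, h₂, h₃⟩
  refine h (containsPattern_of_lt_iff _ (strictMono_vecCons₄ hab hbc hcd) fun j k => ?_)
  fin_cases j <;> fin_cases k <;> simp [p2413] at h₁ h₂ h₃ ⊢ <;> omega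

theorem shapePart_le_of_sublist {u w : List ℕ} (hu : u.Nodup) (h3142 : ¬ ContainsPattern p3142 u)
    (h2413 : ¬ ContainsPattern p2413 u) (h : u.Sublist w) (k : ℕ) :
    shapePart u k ≤ shapePart w k := by
  obtain ⟨e, he⟩ := List.sublist_iff_exists_fin_orderEmbedding_get_eq.1 h
  obtain ⟨S, hS, hSk⟩ := exists_isChainFamily_chainCover_eq (WordLE w.get) univ k
  obtain ⟨c, -, hc, hcS, hcu⟩ := liftsShape_of_avoids e.strictMono (fun i => (he i).symm)
    (List.nodup_iff_injective_get.1 hu) (avoids3142_of_not_containsPattern h3142)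
    (avoids2413_of_not_containsPattern h2413) univ univ (fun i _ => mem_univ (e i)) k
    (univ.image S) ((card_filter_le _ _).trans (card_image_le.trans (by simp)))
    (by simpa using hS.isChain)
  have hcw := hS.sum_card_add_card_le hc (subset_univ c) fun i =>
    hcS (S i) (mem_image_of_mem S (mem_univ i))
  simp only [shapePart, greene_eq_chainCover]
  omega

theorem permWord_nodup {n : ℕ} (σ : Equiv.Perm (Fin n)) : (permWord σ).Nodup :=
  List.nodup_ofFn.2 fun i j h => σ.injective (Fin.ext (by simpa using h))

theorem sum_range_shapePart_le_length (w : List ℕ) (m : ℕ) :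
    ∑ k ∈ range m, shapePart w k ≤ w.length := by
  have hmono : Monotone (greene w) := by
    simpa only [funext (greene_eq_chainCover w)] using chainCover_mono
  calc ∑ k ∈ range m, shapePart w k = greene w m - greene w 0 := sum_range_tsub hmono m
    _ ≤ chainCover (WordLE w.get) univ m := by rw [greene_eq_chainCover]; exact tsub_le_self
    _ ≤ w.length := chainCover_le_card.trans (by simp)

end Words

theorem supersequence_shape_contains_union_general {n : ℕ} (B : Finset (Equiv.Perm (Fin n)))
    (hB : ∀ σ ∈ B, Separable σ) (w : List ℕ)
    (hsup : ∀ σ ∈ B, (permWord σ).Sublist w) :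
    (∀ σ ∈ B, ∀ k : ℕ, shapePart (permWord σ) k ≤ shapePart w k) ∧
      (∑ k ∈ Finset.range n, B.sup fun σ => shapePart (permWord σ) k) ≤ w.length := by
  have hrow : ∀ σ ∈ B, ∀ k, shapePart (permWord σ) k ≤ shapePart w k := fun σ hσ =>
    shapePart_le_of_sublist (permWord_nodup σ) (hB σ hσ).1 (hB σ hσ).2 (hsup σ hσ)
  refine ⟨hrow, ?_⟩
  calc ∑ k ∈ range n, B.sup (fun σ => shapePart (permWord σ) k)
      ≤ ∑ k ∈ range n, shapePart w k := sum_le_sum fun k _ => Finset.sup_le fun σ hσ => hrow σ hσ k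
    _ ≤ w.length := sum_range_shapePart_le_length w n

/-- If `w` is a supersequence of a finite set `B` of separable permutations of `[n]`
(each `σ ∈ B` occurs literally as a subsequence of `w`), then `shape(w)` contains the
union of the Ferrers diagrams of the shapes of the elements of `B`; in particular the
length of `w` is at least the number of cells of that union. -/
theorem supersequence_shape_contains_union {n : ℕ} (B : Finset (Equiv.Perm (Fin n)))
    (hB : ∀ σ ∈ B, Separable σ) (w : List ℕ) (hw : ∀ x ∈ w, 0 < x)
    (hsup : ∀ σ ∈ B, (permWord σ).Sublist w) :
    (∀ σ ∈ B, ∀ k : ℕ, shapePart (permWord σ) k ≤ shapePart w k) ∧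
      (∑ k ∈ Finset.range n, B.sup fun σ => shapePart (permWord σ) k) ≤ w.length :=
  supersequence_shape_contains_union_general B hB w hsup
end

section
/- For n ≥ 1, let μ(n) be the Ferrers diagram obtained as the union of all Ferrers diagrams of partitions of n. Then the number of corners of μ(n) (equivalently, the number of distinct nonzero row lengths of μ(n)) equals ⌊√(4n+1)⌋ − 1. -/
/-- `l` is (the list of row lengths of) a partition of `n`. -/
def IsPartitionOf (n : ℕ) (l : List ℕ) : Prop :=
  l.Pairwise (· ≥ ·) ∧ (∀ x ∈ l, 0 < x) ∧ l.sum = n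

/-- The cell `(i, j)` (row `i`, column `j`, both 1-indexed) lies in `μ(n)`, the union of
the Ferrers diagrams of all partitions of `n`. -/
def InMu (n i j : ℕ) : Prop :=
  ∃ l : List ℕ, IsPartitionOf n l ∧ j ≤ l.getD (i - 1) 0

/-- The length of row `i` (1-indexed) of `μ(n)`. -/
noncomputable def muRow (n i : ℕ) : ℕ := sSup {j | InMu n i j}

/-!
A partition of `n` with at least `i` parts has `i`-th part at most `n / i`, because the first `i`
parts all dominate it; conversely `(n - (i - 1) q, q, …, q)` with `q = n / i` attains this bound.
So row `i` of `μ(n)` has length `⌊n / i⌋`, and the corners count the distinct values of `⌊n / i⌋`.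
With `s = ⌊√n⌋`, the values for `i ≤ s` are pairwise distinct and all exceed `⌊n / (s + 1)⌋`, while
every `q ≤ ⌊n / (s + 1)⌋` is attained as `q = ⌊n / ⌊n / q⌋⌋`. Hence there are `s + ⌊n / (s + 1)⌋`
values, and comparing `n` with `s² + s` shows that this equals `⌊√(4n + 1)⌋ - 1`.
-/

namespace Nat

lemma div_div_self_of_mul_self_le {n q : ℕ} (hq : 0 < q) (h : q * q ≤ n) : n / (n / q) = q := by
  have hqd : q ≤ n / q := (le_div_iff_mul_le hq).2 h
  have hd : 0 < n / q := hq.trans_le hqd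
  have hnq := div_add_mod n q
  have hr := mod_lt n hq
  apply le_antisymm
  · rw [← Nat.lt_add_one_iff, div_lt_iff_lt_mul hd]
    nlinarith
  · rw [le_div_iff_mul_le hd, mul_comm]
    exact div_mul_le_self n q

lemma strictAntiOn_div_Icc_sqrt (n : ℕ) : StrictAntiOn (n / ·) (Set.Icc 1 (sqrt n)) := by
  rintro a ⟨ha, -⟩ b ⟨-, hb⟩ hab
  obtain ⟨c, rfl⟩ : ∃ c, b = c + 1 := ⟨b - 1, by omega⟩
  have hc : c + 1 ≤ n / (c + 1) :=
    (le_div_iff_mul_le c.succ_pos).2 ((Nat.mul_le_mul hb hb).trans (sqrt_le n))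
  have hmul := div_mul_le_self n (c + 1)
  calc n / (c + 1) < n / c := by
        rw [← succ_le_iff, le_div_iff_mul_le (by omega)]
        nlinarith
    _ ≤ n / a := div_le_div_left (by omega) ha

lemma div_succ_sqrt_lt_div_sqrt {n : ℕ} (hn : 0 < n) : n / (sqrt n + 1) < n / sqrt n := by
  have hs : 0 < sqrt n := sqrt_pos.2 hn
  have hsd : sqrt n ≤ n / sqrt n := (le_div_iff_mul_le hs).2 (sqrt_le n)
  have hnq := div_add_mod n (sqrt n)
  have hr := mod_lt n hs
  rw [div_lt_iff_lt_mul (succ_pos _)]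
  nlinarith

lemma sqrt_four_mul_add_one (n : ℕ) : sqrt (4 * n + 1) = sqrt n + n / (sqrt n + 1) + 1 := by
  set s := sqrt n
  set m := n / (s + 1)
  have hs₁ : s * s ≤ n := sqrt_le n
  have hs₂ : n < (s + 1) * (s + 1) := lt_succ_sqrt n
  have hm₁ : m * (s + 1) ≤ n := div_mul_le_self n (s + 1)
  have hm₂ : n < (m + 1) * (s + 1) := by
    rw [← div_lt_iff_lt_mul (succ_pos s)]; exact lt_succ_self m
  have hms : m ≤ s := Nat.lt_add_one_iff.1 ((div_lt_iff_lt_mul (succ_pos s)).2 hs₂)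
  have hsm : s ≤ m + 1 := by
    rw [← add_div_right n (succ_pos s), le_div_iff_mul_le (succ_pos s)]
    nlinarith
  symm
  rw [eq_sqrt]
  rcases (by omega : s = m ∨ s = m + 1) with h | h <;> rw [h] at hs₁ hs₂ hm₁ hm₂ ⊢ <;>
    constructor <;> nlinarith

lemma image_div_Icc_eq (n : ℕ) :
    (Finset.Icc 1 n).image (n / ·) =
      (Finset.Icc 1 (sqrt n)).image (n / ·) ∪ Finset.Icc 1 (n / (sqrt n + 1)) := by
  ext q
  simp only [Finset.mem_union, Finset.mem_image, Finset.mem_Icc]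
  constructor
  · rintro ⟨i, ⟨hi, hin⟩, rfl⟩
    rcases le_or_gt i (sqrt n) with his | his
    · exact Or.inl ⟨i, ⟨hi, his⟩, rfl⟩
    · exact Or.inr ⟨div_pos hin hi, div_le_div_left his (succ_pos _)⟩
  · rintro (⟨i, ⟨hi, his⟩, rfl⟩ | ⟨hq, hqm⟩)
    · exact ⟨i, ⟨hi, his.trans (sqrt_le_self n)⟩, rfl⟩
    · have hqs : q ≤ sqrt n :=
        hqm.trans (Nat.lt_add_one_iff.1 ((div_lt_iff_lt_mul (succ_pos _)).2 (lt_succ_sqrt n)))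
      have hqq : q * q ≤ n := (Nat.mul_le_mul hqs hqs).trans (sqrt_le n)
      exact ⟨n / q, ⟨div_pos (by nlinarith) hq, div_le_self n q⟩,
        div_div_self_of_mul_self_le hq hqq⟩

lemma card_image_div_Icc (n : ℕ) :
    ((Finset.Icc 1 n).image (n / ·)).card = sqrt (4 * n + 1) - 1 := by
  have hdisj : Disjoint ((Finset.Icc 1 (sqrt n)).image (n / ·))
      (Finset.Icc 1 (n / (sqrt n + 1))) := by
    rw [Finset.disjoint_left]
    rintro _ hq hq'
    obtain ⟨i, hi, rfl⟩ := Finset.mem_image.1 hq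
    rw [Finset.mem_Icc] at hi hq'
    have hn : 0 < n := sqrt_pos.1 (hi.1.trans hi.2)
    have : n / sqrt n ≤ n / i := div_le_div_left hi.2 hi.1
    have := div_succ_sqrt_lt_div_sqrt hn
    omega
  rw [image_div_Icc_eq, Finset.card_union_of_disjoint hdisj,
    Finset.card_image_of_injOn (by simpa using (strictAntiOn_div_Icc_sqrt n).injOn),
    card_Icc, card_Icc, sqrt_four_mul_add_one]
  simp

end Nat

lemma List.succ_mul_getD_le_sum {l : List ℕ} (hl : l.Pairwise (· ≥ ·)) (k : ℕ) :
    (k + 1) * l.getD k 0 ≤ l.sum := by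
  induction l generalizing k with
  | nil => simp
  | cons a t ih =>
    rw [List.pairwise_cons] at hl
    cases k with
    | zero => simp
    | succ k =>
      have hle : t.getD k 0 ≤ a := by
        rw [List.getD_eq_getElem?_getD]
        cases h : t[k]? with
        | none => simp
        | some x => exact hl.1 x (List.mem_of_getElem? h)
      have := ih hl.2 k
      simp only [List.getD_cons_succ, List.sum_cons]
      nlinarith

lemma IsPartitionOf.cons_replicate {m q : ℕ} (hq : 0 < q) (hqm : q ≤ m) (k : ℕ) :
    IsPartitionOf (m + k * q) (m :: List.replicate k q) := by
  refine ⟨?_, ?_, by simp [List.sum_replicate]⟩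
  · simp only [List.pairwise_cons, List.mem_replicate, List.pairwise_replicate]
    exact ⟨fun _ h => h.2 ▸ hqm, Or.inr le_rfl⟩
  · simp only [List.mem_cons, List.mem_replicate]
    rintro x (rfl | ⟨-, rfl⟩) <;> omega

lemma InMu.mul_le {n i j : ℕ} (hi : 0 < i) (h : InMu n i j) : i * j ≤ n := by
  obtain ⟨l, ⟨hl, -, rfl⟩, hj⟩ := h
  calc i * j ≤ (i - 1 + 1) * l.getD (i - 1) 0 := by
        rw [Nat.sub_add_cancel hi]; exact Nat.mul_le_mul_left i hj
    _ ≤ l.sum := List.succ_mul_getD_le_sum hl (i - 1)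

lemma inMu_of_mul_le {n i j : ℕ} (hi : 0 < i) (hj : 0 < j) (h : i * j ≤ n) : InMu n i j := by
  obtain ⟨k, rfl⟩ : ∃ k, i = k + 1 := ⟨i - 1, by omega⟩
  rw [Nat.succ_mul] at h
  have hpart := IsPartitionOf.cons_replicate hj (Nat.le_sub_of_add_le' h) k
  rw [Nat.sub_add_cancel (le_of_add_le_left h)] at hpart
  refine ⟨_, hpart, ?_⟩
  cases k with
  | zero => simpa using Nat.le_sub_of_add_le' h
  | succ => simp

lemma muRow_eq_div {n i : ℕ} (hi : 0 < i) (hin : i ≤ n) : muRow n i = n / i := by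
  refine IsGreatest.csSup_eq ⟨?_, fun j hj => ?_⟩
  · exact inMu_of_mul_le hi (Nat.div_pos hin hi) (Nat.mul_div_le n i)
  · exact (Nat.le_div_iff_mul_le hi).2 (mul_comm i j ▸ hj.mul_le hi)

theorem corners_mu_eq_general (n : ℕ) :
    ((((Finset.Icc 1 n).image (muRow n)).filter fun r => 0 < r).card)
      = Nat.sqrt (4 * n + 1) - 1 := by
  have hrow : Set.EqOn (muRow n) (n / ·) (Finset.Icc 1 n) := fun i hi => by
    rw [Finset.coe_Icc] at hi
    exact muRow_eq_div hi.1 hi.2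
  rw [Finset.image_congr hrow, Finset.filter_true_of_mem, Nat.card_image_div_Icc]
  simp only [Finset.mem_image, Finset.mem_Icc]
  rintro _ ⟨i, ⟨hi, hin⟩, rfl⟩
  exact Nat.div_pos hin hi

/-- The number of corners of `μ(n)`, i.e. the number of distinct nonzero row lengths of
`μ(n)`, equals `⌊√(4n+1)⌋ - 1`. (All rows of `μ(n)` beyond row `n` are empty, so the
distinct nonzero row lengths are realized among rows `1, …, n`.) -/
theorem corners_mu_eq (n : ℕ) (hn : 1 ≤ n) :
    ((((Finset.Icc 1 n).image (muRow n)).filter fun r => 0 < r).card)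
      = Nat.sqrt (4 * n + 1) - 1 :=
  corners_mu_eq_general n
end

section
/- For every n ≥ 1 there exists a set B of at most ⌊√(4n+1)⌋ − 1 permutations in S_n, each of which is separable, such that every supersequence of B has length at least Σ_{i=1}^n τ(i), where τ(i) denotes the number of positive divisors of i. -/
/-!
The witnesses are, for each value `a = ⌊n / j⌋`, the skew sums of `a` increasing runs of length
`⌊n / a⌋ ≥ j` (reading words of rectangular superstandard tableaux), and `j ↦ ⌊n / j⌋` takes at most
`⌊√(4n+1)⌋ - 1` values. A supersequence `w` contains all of them, so greedily, for `j = 1, …, n`, it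
has pairwise disjoint strictly decreasing subsequences of lengths `⌊n / j⌋`: the `j - 1` earlier
ones meet each increasing run of the `j`-th witness at most once, so every run keeps a free letter.
Hence `|w| ≥ ∑ ⌊n / j⌋ = ∑ τ(i)`.
-/

namespace Supersequence

open Finset

section SkewGrid

variable {α β : Type*} [LinearOrder α] [Preorder β]

def IsSkewGrid {a b : ℕ} (v : α → β) (G : Fin a → Fin b → α) : Prop :=
  (∀ i, StrictMono (G i) ∧ StrictMono (v ∘ G i)) ∧
    ∀ i i', i < i' → ∀ t t', G i t < G i' t' ∧ v (G i' t') < v (G i t)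

variable {a b : ℕ} {v : α → β} {G : Fin a → Fin b → α}

lemma IsSkewGrid.comp {γ δ : Type*} [LinearOrder γ] [Preorder δ] (hG : IsSkewGrid v G)
    {e : α → γ} {g : β → δ} {v' : γ → δ} (he : StrictMono e) (hg : StrictMono g)
    (hv : ∀ x, v' (e x) = g (v x)) : IsSkewGrid v' fun i t => e (G i t) := by
  refine ⟨fun i => ⟨he.comp (hG.1 i).1, ?_⟩, fun i i' hii' t t' => ?_⟩
  · have := hg.comp (hG.1 i).2
    simpa only [Function.comp_def, hv] using this
  · obtain ⟨hpos, hval⟩ := hG.2 i i' hii' t t'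
    exact ⟨he hpos, by simpa only [hv] using hg hval⟩

lemma IsSkewGrid.card_filter_mem_le_one (hG : IsSkewGrid v G) {C : Finset α}
    (hC : StrictAntiOn v (C : Set α)) (i : Fin a) : #{t | G i t ∈ C} ≤ 1 := by
  refine card_le_one.2 fun t ht t' ht' => ?_
  simp only [mem_filter, mem_univ, true_and] at ht ht'
  by_contra hne
  rcases lt_or_gt_of_ne hne with h | h
  · exact (hC ht ht' ((hG.1 i).1 h)).not_gt ((hG.1 i).2 h)
  · exact (hC ht' ht ((hG.1 i).1 h)).not_gt ((hG.1 i).2 h)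

/-- Each of `k` decreasing chains meets a run at most once, so runs longer than `k` leave a free
point in every run, and the free points form a new decreasing chain. -/
lemma IsSkewGrid.exists_strictAntiOn_disjoint (hG : IsSkewGrid v G) {k : ℕ} (hkb : k < b)
    {C : ℕ → Finset α} (hC : ∀ j < k, StrictAntiOn v (C j : Set α)) :
    ∃ D : Finset α, StrictAntiOn v (D : Set α) ∧ #D = a ∧ ∀ j < k, Disjoint D (C j) := by
  have hfree : ∀ i, ∃ t, ∀ j < k, G i t ∉ C j := by
    intro i
    by_contra! hused
    have hcover : (univ : Finset (Fin b)) ⊆ (range k).biUnion fun j => {t | G i t ∈ C j} := by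
      intro t _
      obtain ⟨j, hj, ht⟩ := hused t
      exact mem_biUnion.2 ⟨j, mem_range.2 hj, by simpa using ht⟩
    have := (card_le_card hcover).trans <| card_biUnion_le_card_mul _ _ 1 fun j hj =>
      hG.card_filter_mem_le_one (hC j (mem_range.1 hj)) i
    simp only [card_univ, Fintype.card_fin, card_range, mul_one] at this
    omega
  choose T hT using hfree
  have hmono : StrictMono fun i => G i (T i) := fun i i' h => (hG.2 i i' h _ _).1
  refine ⟨univ.image fun i => G i (T i), ?_, ?_, ?_⟩
  · simp only [coe_image, coe_univ, Set.image_univ]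
    rintro - ⟨i, rfl⟩ - ⟨i', rfl⟩ hlt
    exact (hG.2 i i' (hmono.lt_iff_lt.1 hlt) _ _).2
  · rw [card_image_of_injective _ hmono.injective, card_univ, Fintype.card_fin]
  · intro j hj
    simp only [disjoint_left, mem_image, mem_univ, true_and]
    rintro - ⟨i, rfl⟩
    exact hT i j hj

lemma exists_pairwiseDisjoint_strictAntiOn {a : ℕ → ℕ} {m : ℕ}
    (h : ∀ k < m, ∃ b, k < b ∧ ∃ G : Fin (a k) → Fin b → α, IsSkewGrid v G) :
    ∃ C : ℕ → Finset α, (∀ k < m, StrictAntiOn v (C k : Set α) ∧ #(C k) = a k) ∧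
      (range m : Set ℕ).PairwiseDisjoint C := by
  induction m with
  | zero => exact ⟨fun _ => ∅, by simp, by simp⟩
  | succ m ih =>
    obtain ⟨C, hC, hdisj⟩ := ih fun k hk => h k (by omega)
    obtain ⟨b, hmb, G, hG⟩ := h m (by omega)
    obtain ⟨D, hD, hDcard, hDdisj⟩ :=
      hG.exists_strictAntiOn_disjoint hmb fun j hj => (hC j hj).1
    refine ⟨Function.update C m D, fun k hk => ?_, ?_⟩
    · rcases Nat.lt_succ_iff_lt_or_eq.1 hk with hk | rfl
      · simpa [Function.update_of_ne hk.ne] using hC k hk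
      · simpa using ⟨hD, hDcard⟩
    · rw [range_add_one, coe_insert]
      refine Set.PairwiseDisjoint.insert (fun j hj j' hj' hne => ?_) fun j hj hne => ?_
      · simp only [mem_coe, mem_range] at hj hj'
        simpa [Function.onFun, Function.update_of_ne hj.ne, Function.update_of_ne hj'.ne]
          using hdisj (by simpa using hj) (by simpa using hj') hne
      · simp only [mem_coe, mem_range] at hj
        simpa [Function.update_of_ne hj.ne] using hDdisj j hj

theorem sum_le_card_of_isSkewGrid [Fintype α] {a : ℕ → ℕ} {m : ℕ}
    (h : ∀ k < m, ∃ b, k < b ∧ ∃ G : Fin (a k) → Fin b → α, IsSkewGrid v G) :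
    ∑ k ∈ range m, a k ≤ Fintype.card α := by
  classical
  obtain ⟨C, hC, hdisj⟩ := exists_pairwiseDisjoint_strictAntiOn h
  calc ∑ k ∈ range m, a k = ∑ k ∈ range m, #(C k) :=
        sum_congr rfl fun k hk => ((hC k (mem_range.1 hk)).2).symm
    _ = #((range m).biUnion C) := (card_biUnion hdisj).symm
    _ ≤ Fintype.card α := card_le_univ _

end SkewGrid

section SkewBlockPerm

variable {n : ℕ}

lemma permWord_length (σ : Equiv.Perm (Fin n)) : (permWord σ).length = n :=
  List.length_ofFn

lemma permWord_get (σ : Equiv.Perm (Fin n)) (p : Fin (permWord σ).length) :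
    (permWord σ).get p = σ (p.cast (permWord_length σ)) + 1 :=
  List.get_ofFn _ p

lemma ContainsPattern.exists_strictMono_of_permWord {m : ℕ} {π : Equiv.Perm (Fin m)}
    {σ : Equiv.Perm (Fin n)} (h : ContainsPattern π (permWord σ)) :
    ∃ g : Fin m → Fin n, StrictMono g ∧ ∀ j k, π j < π k → σ (g j) < σ (g k) := by
  obtain ⟨f, hf, hcmp⟩ := h
  refine ⟨fun j => (f j).cast (permWord_length σ), fun j k h => hf h, fun j k h => ?_⟩
  have := (hcmp j k).1.2 h
  rw [permWord_get, permWord_get] at this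
  exact Fin.lt_def.2 (Nat.lt_of_add_lt_add_right this)

theorem separable_of_monotone {σ : Equiv.Perm (Fin n)} {β : Fin n → ℕ} (hβ : Monotone β)
    (hσ : ∀ p q, p < q → (σ p < σ q ↔ β p = β q)) : Separable σ := by
  refine ⟨fun h => ?_, fun h => ?_⟩
  · obtain ⟨g, hg, hcmp⟩ := ContainsPattern.exists_strictMono_of_permWord h
    have h02 : β (g 0) = β (g 2) := (hσ _ _ (hg (by decide))).1 (hcmp 0 2 (by decide))
    have h01 : β (g 0) = β (g 1) :=
      le_antisymm (hβ (hg (by decide)).le) (h02 ▸ hβ (hg (by decide)).le)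
    exact (hcmp 1 0 (by decide)).asymm ((hσ _ _ (hg (by decide))).2 h01)
  · obtain ⟨g, hg, hcmp⟩ := ContainsPattern.exists_strictMono_of_permWord h
    have h01 : β (g 0) = β (g 1) := (hσ _ _ (hg (by decide))).1 (hcmp 0 1 (by decide))
    have h23 : β (g 2) = β (g 3) := (hσ _ _ (hg (by decide))).1 (hcmp 2 3 (by decide))
    have h03 : β (g 0) = β (g 3) := (hσ _ _ (hg (by decide))).1 (hcmp 0 3 (by decide))
    exact (hcmp 2 1 (by decide)).asymm ((hσ _ _ (hg (by decide))).2 (by omega))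

/-- Ranks the positions by decreasing block index `β`, ties broken by position, so that the
one-line word is the skew sum of the increasing runs `β⁻¹(i)`. -/
def skewBlockPerm (β : Fin n → ℕ) : Equiv.Perm (Fin n) :=
  (Tuple.sort fun p => toLex (OrderDual.toDual (β p), p))⁻¹

lemma skewBlockPerm_lt_iff {β : Fin n → ℕ} {p q : Fin n} :
    skewBlockPerm β p < skewBlockPerm β q ↔ β q < β p ∨ β p = β q ∧ p < q := by
  set key : Fin n → ℕᵒᵈ ×ₗ Fin n := fun p => toLex (OrderDual.toDual (β p), p)
  have hinj : Function.Injective key := fun p q h => congrArg (fun x => (ofLex x).2) h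
  have hkey : StrictMono (key ∘ Tuple.sort key) :=
    (Tuple.monotone_sort key).strictMono_of_injective (hinj.comp (Equiv.injective _))
  rw [skewBlockPerm, ← hkey.lt_iff_lt]
  simp only [Function.comp_apply, Equiv.Perm.coe_inv, Equiv.apply_symm_apply, key,
    Prod.Lex.toLex_lt_toLex, OrderDual.toDual_lt_toDual, OrderDual.toDual_inj]

lemma skewBlockPerm_lt_iff_of_lt {β : Fin n → ℕ} (hβ : Monotone β) {p q : Fin n} (hpq : p < q) :
    skewBlockPerm β p < skewBlockPerm β q ↔ β p = β q := by
  rw [skewBlockPerm_lt_iff]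
  have := hβ hpq.le
  constructor
  · rintro (h | h) <;> omega
  · exact fun h => Or.inr ⟨h, hpq⟩

theorem separable_skewBlockPerm {β : Fin n → ℕ} (hβ : Monotone β) : Separable (skewBlockPerm β) :=
  separable_of_monotone hβ fun _ _ => skewBlockPerm_lt_iff_of_lt hβ

end SkewBlockPerm

variable {n : ℕ}

lemma IsSkewGrid.exists_of_permWord_sublist {a b : ℕ} {σ : Equiv.Perm (Fin n)} {w : List ℕ}
    (hw : (permWord σ).Sublist w) {G : Fin a → Fin b → Fin n} (hG : IsSkewGrid σ G) :
    ∃ G' : Fin a → Fin b → Fin w.length, IsSkewGrid w.get G' := by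
  obtain ⟨E, hE⟩ := List.sublist_iff_exists_fin_orderEmbedding_get_eq.1 hw
  refine ⟨_, hG.comp (e := fun p => E (p.cast (permWord_length σ).symm))
    (g := fun x : Fin n => (x : ℕ) + 1) (fun p q h => E.strictMono h)
    (fun x y h => Nat.add_lt_add_right h 1) fun p => ?_⟩
  rw [← hE, permWord_get]
  rfl

/-- Truncated subtraction merges the first `n % a` positions into block `0`. -/
def blockIdx (n a : ℕ) (p : Fin n) : ℕ := (p - n % a) / (n / a)

lemma blockIdx_monotone (a : ℕ) : Monotone (blockIdx n a) :=
  fun _ _ h => Nat.div_le_div_right (Nat.sub_le_sub_right h _)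

/-- The reading word of the superstandard tableau of the `a × (n / a)` rectangle, with the missing
letters `a * (n / a) + 1, …, n` appended to its first run. -/
def rectPerm (n a : ℕ) : Equiv.Perm (Fin n) := skewBlockPerm (blockIdx n a)

lemma mod_add_mul_div_add_lt {a : ℕ} (i : Fin a) (t : Fin (n / a)) :
    n % a + i * (n / a) + t < n := by
  have h₁ : (i + 1) * (n / a) ≤ a * (n / a) := Nat.mul_le_mul_right _ i.2
  have h₂ := Nat.mod_add_div n a
  have h₃ := t.2
  rw [add_one_mul] at h₁
  omega

def rectPos {a : ℕ} (i : Fin a) (t : Fin (n / a)) : Fin n :=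
  ⟨n % a + i * (n / a) + t, mod_add_mul_div_add_lt i t⟩

lemma blockIdx_rectPos {a : ℕ} (i : Fin a) (t : Fin (n / a)) : blockIdx n a (rectPos i t) = i := by
  have hb : 0 < n / a := t.pos
  simp only [blockIdx, rectPos, add_assoc, Nat.add_sub_cancel_left]
  rw [add_comm, Nat.add_mul_div_right _ _ hb, Nat.div_eq_of_lt t.2, zero_add]

lemma rectPos_lt_rectPos {a : ℕ} {i i' : Fin a} (hi : i < i') (t t' : Fin (n / a)) :
    rectPos i t < rectPos i' t' := by
  have h : (i + 1) * (n / a) ≤ i' * (n / a) := Nat.mul_le_mul_right _ hi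
  have := t.2
  rw [add_one_mul] at h
  simp only [rectPos, Fin.mk_lt_mk]
  omega

theorem isSkewGrid_rectPerm (a : ℕ) : IsSkewGrid (rectPerm n a) (rectPos (a := a)) := by
  refine ⟨fun i => ⟨fun t t' h => ?_, fun t t' h => ?_⟩, fun i i' hi t t' =>
    ⟨rectPos_lt_rectPos hi t t', ?_⟩⟩
  · simpa [rectPos] using h
  · have hpos : rectPos i t < rectPos i t' := by simpa [rectPos] using h
    exact (skewBlockPerm_lt_iff_of_lt (blockIdx_monotone a) hpos).2
      (by rw [blockIdx_rectPos, blockIdx_rectPos])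
  · exact skewBlockPerm_lt_iff.2 (Or.inl (by rwa [blockIdx_rectPos, blockIdx_rectPos]))

lemma lt_div_div_succ {k : ℕ} (hk : k < n) : k < n / (n / (k + 1)) :=
  (Nat.le_div_iff_mul_le (Nat.div_pos hk (Nat.succ_pos k))).2 (Nat.mul_div_le n (k + 1))

lemma sum_card_divisors_eq_sum_div (n : ℕ) :
    ∑ i ∈ Icc 1 n, #i.divisors = ∑ k ∈ range n, n / (k + 1) := by
  calc ∑ i ∈ Icc 1 n, #i.divisors = ∑ i ∈ Icc 1 n, ∑ d ∈ i.divisors, 1 := by simp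
    _ = ∑ d ∈ Icc 1 n, ∑ i ∈ {i ∈ Icc 1 n | d ∣ i}, 1 := by
      refine sum_comm' fun i d => ?_
      simp only [mem_Icc, Nat.mem_divisors, mem_filter]
      constructor
      · rintro ⟨⟨hi, hin⟩, hd, -⟩
        exact ⟨⟨⟨hi, hin⟩, hd⟩, Nat.pos_of_dvd_of_pos hd hi, (Nat.le_of_dvd hi hd).trans hin⟩
      · rintro ⟨⟨⟨hi, hin⟩, hd⟩, -⟩
        exact ⟨⟨hi, hin⟩, hd, by omega⟩
    _ = ∑ d ∈ Icc 1 n, n / d := by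
      refine sum_congr rfl fun d _ => ?_
      rw [← Nat.Ioc_filter_dvd_card_eq_div, card_eq_sum_ones, ← Icc_add_one_left_eq_Ioc, zero_add]
    _ = ∑ k ∈ range n, n / (k + 1) := by
      rw [← Ico_add_one_right_eq_Icc, sum_Ico_eq_sum_range, Nat.add_sub_cancel]
      simp only [add_comm]

lemma card_image_div_le (n : ℕ) : #((Icc 1 n).image (n / ·)) ≤ n.sqrt + n / (n.sqrt + 1) := by
  have hsub : (Icc 1 n).image (n / ·) ⊆
      (Icc 1 n.sqrt).image (n / ·) ∪ Icc 1 (n / (n.sqrt + 1)) := by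
    simp only [subset_iff, mem_image, mem_union, mem_Icc]
    rintro - ⟨j, ⟨hj, hjn⟩, rfl⟩
    by_cases hjs : j ≤ n.sqrt
    · exact Or.inl ⟨j, ⟨hj, hjs⟩, rfl⟩
    · exact Or.inr ⟨Nat.div_pos hjn hj, Nat.div_le_div_left (by omega) (Nat.succ_pos _)⟩
  calc _ ≤ #((Icc 1 n.sqrt).image (n / ·)) + #(Icc 1 (n / (n.sqrt + 1))) :=
        (card_le_card hsub).trans (card_union_le _ _)
    _ ≤ n.sqrt + n / (n.sqrt + 1) := by
      gcongr
      · exact card_image_le.trans (by simp)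
      · simp

lemma sqrt_add_div_lt_sqrt (n : ℕ) : n.sqrt + n / (n.sqrt + 1) < (4 * n + 1).sqrt := by
  have hs : n.sqrt ^ 2 ≤ n := Nat.sqrt_le' n
  have hqs : n / (n.sqrt + 1) ≤ n.sqrt := Nat.lt_succ_iff.1 <|
    (Nat.div_lt_iff_lt_mul (Nat.succ_pos _)).2 <| by simpa [sq] using Nat.lt_succ_sqrt' n
  have hq : (n.sqrt + 1) * (n / (n.sqrt + 1)) ≤ n := Nat.mul_div_le n _
  generalize n.sqrt = s at *
  generalize n / (s + 1) = q at *
  rw [Nat.lt_iff_add_one_le, Nat.le_sqrt']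
  rcases hqs.eq_or_lt with rfl | h <;> nlinarith

end Supersequence

open Supersequence Finset

theorem exists_separable_family_long_supersequence_general (n : ℕ) :
    ∃ B : Finset (Equiv.Perm (Fin n)),
      B.card ≤ Nat.sqrt (4 * n + 1) - 1 ∧
      (∀ σ ∈ B, Separable σ) ∧
      ∀ w : List ℕ, (∀ x ∈ w, 0 < x) → (∀ σ ∈ B, (permWord σ).Sublist w) →
        (∑ i ∈ Finset.Icc 1 n, (Nat.divisors i).card) ≤ w.length := by
  refine ⟨((Icc 1 n).image (n / ·)).image (rectPerm n), ?_, ?_, ?_⟩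
  · have := (card_image_le (f := rectPerm n)).trans_lt <|
      (card_image_div_le n).trans_lt (sqrt_add_div_lt_sqrt n)
    omega
  · simp only [mem_image]
    rintro - ⟨a, -, rfl⟩
    exact separable_skewBlockPerm (blockIdx_monotone a)
  · rintro w - hw
    rw [sum_card_divisors_eq_sum_div, ← Fintype.card_fin w.length]
    refine sum_le_card_of_isSkewGrid (v := w.get) fun k hk => ⟨_, lt_div_div_succ hk, ?_⟩
    refine (isSkewGrid_rectPerm _).exists_of_permWord_sublist (hw _ ?_)
    exact mem_image_of_mem _ (mem_image_of_mem _ (mem_Icc.2 ⟨k.succ_pos, hk⟩))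

/-- For every `n ≥ 1` there is a set `B` of at most `⌊√(4n+1)⌋ - 1` separable
permutations of `[n]` such that every supersequence of `B` has length at least
`∑_{i=1}^n τ(i)`, where `τ(i)` is the number of positive divisors of `i`. -/
theorem exists_separable_family_long_supersequence (n : ℕ) (hn : 1 ≤ n) :
    ∃ B : Finset (Equiv.Perm (Fin n)),
      B.card ≤ Nat.sqrt (4 * n + 1) - 1 ∧
      (∀ σ ∈ B, Separable σ) ∧
      ∀ w : List ℕ, (∀ x ∈ w, 0 < x) → (∀ σ ∈ B, (permWord σ).Sublist w) →
        (∑ i ∈ Finset.Icc 1 n, (Nat.divisors i).card) ≤ w.length :=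
  exists_separable_family_long_supersequence_general n
end

section
/- Let w be a word with shape(w) = μ, let σ be a permutation contained in w as a pattern, realized by a subsequence σ′ of w, and let w^1, …, w^k be pairwise disjoint weakly increasing subsequences of w with |w^1| + ⋯ + |w^k| = μ_1 + ⋯ + μ_k. If u′ is a subsequence of σ′ that is disjoint from each w^i and corresponds to an increasing subsequence of σ, then |u′| ≤ μ_{k+1}. -/
lemma greene_mem_le (w : List ℕ) (d : ℕ) {N : ℕ}
    (h : N ∈ {N | ∃ S : Fin d → Finset (Fin w.length),
      (∀ i, WkInc w (S i)) ∧ (∀ i j, i ≠ j → Disjoint (S i) (S j)) ∧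
      N = ∑ i, (S i).card}) : N ≤ w.length := by
  obtain ⟨S, -, hdisj, rfl⟩ := h
  calc ∑ i, (S i).card = (Finset.univ.biUnion S).card :=
        (Finset.card_biUnion (fun i _ j _ h => hdisj i j h)).symm
    _ ≤ w.length := by simpa using Finset.card_le_univ (Finset.univ.biUnion S)

lemma greene_bdd (w : List ℕ) (d : ℕ) :
    BddAbove {N | ∃ S : Fin d → Finset (Fin w.length),
      (∀ i, WkInc w (S i)) ∧ (∀ i j, i ≠ j → Disjoint (S i) (S j)) ∧
      N = ∑ i, (S i).card} :=
  ⟨w.length, fun _ hN => greene_mem_le w d hN⟩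

lemma le_greene (w : List ℕ) (d : ℕ) {N : ℕ}
    (h : N ∈ {N | ∃ S : Fin d → Finset (Fin w.length),
      (∀ i, WkInc w (S i)) ∧ (∀ i j, i ≠ j → Disjoint (S i) (S j)) ∧
      N = ∑ i, (S i).card}) : N ≤ greene w d :=
  le_csSup (greene_bdd w d) h

lemma sum_snoc_le_greene (w : List ℕ) (d : ℕ) (S : Fin d → Finset (Fin w.length))
    (hS : ∀ i, WkInc w (S i)) (hd : ∀ i j, i ≠ j → Disjoint (S i) (S j))
    (T : Finset (Fin w.length)) (hT : WkInc w T)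
    (hTd : ∀ i, Disjoint T (S i)) :
    ∑ i, (S i).card + T.card ≤ greene w (d + 1) := by
  apply le_greene
  refine ⟨Fin.snoc S T, ?_, ?_, ?_⟩
  · intro i
    refine Fin.lastCases ?_ ?_ i
    · simpa using hT
    · intro i'; simpa using hS i'
  · intro i j hij
    obtain ⟨i', rfl⟩ | rfl := Fin.eq_castSucc_or_eq_last i <;>
      obtain ⟨j', rfl⟩ | rfl := Fin.eq_castSucc_or_eq_last j
    · have : i' ≠ j' := fun h => hij (by rw [h])
      simpa using hd i' j' this
    · simpa using (hTd i').symm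
    · simpa using hTd j'
    · exact absurd rfl hij
  · rw [Fin.sum_univ_castSucc]
    simp

lemma greene_zero (w : List ℕ) : greene w 0 = 0 := by
  have h : greene w 0 ≤ 0 := by
    apply csSup_le
    · exact ⟨0, fun i => i.elim0, fun i => i.elim0, fun i j h => i.elim0, by simp⟩
    · rintro N ⟨S, -, -, rfl⟩; simp
  omega

lemma greene_mono (w : List ℕ) (d : ℕ) : greene w d ≤ greene w (d + 1) := by
  apply csSup_le_csSup (greene_bdd w (d+1))
  · exact ⟨0, fun i => ∅, fun i p hp => absurd hp (by simp), fun i j h => by simp, by simp⟩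
  · rintro N ⟨S, hS, hd, rfl⟩
    have := sum_snoc_le_greene w d S hS hd ∅ (fun p hp => absurd hp (by simp))
      (fun i => by simp)
    refine ⟨Fin.snoc S ∅, ?_, ?_, ?_⟩
    · intro i
      refine Fin.lastCases ?_ (fun i' => ?_) i
      · intro p hp; simp at hp
      · simpa using hS i'
    · intro i j hij
      obtain ⟨i', rfl⟩ | rfl := Fin.eq_castSucc_or_eq_last i <;>
        obtain ⟨j', rfl⟩ | rfl := Fin.eq_castSucc_or_eq_last j
      · have : i' ≠ j' := fun h => hij (by rw [h])
        simpa using hd i' j' this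
      · simp
      · simp
      · exact absurd rfl hij
    · rw [Fin.sum_univ_castSucc]; simp

lemma sum_shapePart (w : List ℕ) (k : ℕ) :
    ∑ i ∈ Finset.range k, shapePart w i = greene w k := by
  induction k with
  | zero => simp [greene_zero]
  | succ k ih =>
    rw [Finset.sum_range_succ, ih, shapePart]
    have := greene_mono w k
    omega

/-- Let `w` have shape `μ` and contain the pattern `σ`, realized via the strictly
monotone position map `g` (so `σ'`, the subsequence of `w` at the positions `g j`, is
order-isomorphic to `σ`). If `W 0, …, W (k-1)` are pairwise disjoint weakly increasing
subsequences of `w` of maximum total length `μ₁ + ⋯ + μ_k`, and `u' = g '' t` is a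
subsequence of `σ'` disjoint from each `W i` corresponding to an increasing
subsequence `t` of `σ`, then `|u'| ≤ μ_{k+1}`. -/
theorem card_le_next_shapePart {m : ℕ} (w : List ℕ) (hwpos : ∀ x ∈ w, 0 < x)
    (σ : Equiv.Perm (Fin m)) (g : Fin m → Fin w.length) (hg : StrictMono g)
    (hpat : ∀ j k : Fin m,
      (w.get (g j) < w.get (g k) ↔ σ j < σ k) ∧
      (w.get (g k) < w.get (g j) ↔ σ k < σ j))
    (k : ℕ) (W : Fin k → Finset (Fin w.length))
    (hWinc : ∀ i, WkInc w (W i))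
    (hWdisj : ∀ i j, i ≠ j → Disjoint (W i) (W j))
    (hWsum : ∑ i, (W i).card = ∑ i ∈ Finset.range k, shapePart w i)
    (t : Finset (Fin m)) (ht : IncSubseq σ t)
    (hdisj : ∀ i, Disjoint (t.image g) (W i)) :
    (t.image g).card ≤ shapePart w k := by
  have hT : WkInc w (t.image g) := by
    intro p hp q hq hpq
    obtain ⟨a, ha, rfl⟩ := Finset.mem_image.1 hp
    obtain ⟨b, hb, rfl⟩ := Finset.mem_image.1 hq
    have hab : a < b := hg.lt_iff_lt.1 hpq
    exact le_of_lt ((hpat a b).1.mpr (ht a ha b hb hab))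
  have key := sum_snoc_le_greene w k W hWinc hWdisj (t.image g) hT
    (fun i => hdisj i)
  rw [hWsum, sum_shapePart] at key
  have := greene_mono w k
  unfold shapePart
  omega
end
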